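/- arXiv:1409.2652 — 3 statements merged into one kernel-verified Lean document; each statement's English description precedes it below -/
import Mathlib

section
/- Let M be an N-function with complementary function M*. Suppose Φ_i : Q → S³ and Ψ_i : Q → S³ are sequences with uniformly bounded modulars sup_i ∫_Q M(x,Φ_i) dx dt < ∞ and sup_i ∫_Q M*(x,Ψ_i) dx dt < ∞, Φ_i → Φ modularly in L_M(Q), and Ψ_i → Ψ modularly in L_{M*}(Q). Then Φ_i:Ψ_i → Φ:Ψ strongly in L¹(Q). -/
open MeasureTheory Filter Set Topology

noncomputable section

/-- `ℝ³`, the ambient space of the material body `Ω`. -/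
abbrev E3 := EuclideanSpace ℝ (Fin 3)

/-- `3 × 3` real matrices. -/
abbrev Mat3 := Matrix (Fin 3) (Fin 3) ℝ

instance : MeasurableSpace Mat3 := inferInstanceAs (MeasurableSpace (Fin 3 → Fin 3 → ℝ))

/-- The Frobenius inner product `ξ : η` on matrices. -/
def mdot (ξ η : Mat3) : ℝ := ∑ i, ∑ j, ξ i j * η i j

/-- The Frobenius norm `|ξ|` of a matrix. -/
def mnorm (ξ : Mat3) : ℝ := Real.sqrt (mdot ξ ξ)

/-- `S³`: the set of symmetric `3 × 3` real matrices. -/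
def Sym3 : Set Mat3 := {A | A.IsSymm}

/-- `S³_d`: the set of symmetric traceless `3 × 3` real matrices. -/
def Sym3d : Set Mat3 := {A | A.IsSymm ∧ A.trace = 0}

/-- `M : Ω × S³ → [0,∞)` is an `N`-function: Carathéodory (measurable in `x`,
continuous in `ξ`), vanishing exactly at `0`, even, convex in `ξ`, with
`M(x,ξ)/|ξ| → 0` as `|ξ| → 0` and `M(x,ξ)/|ξ| → ∞` as `|ξ| → ∞`. -/
structure IsNFunction (Ω : Set E3) (M : E3 → Mat3 → ℝ) : Prop where
  nonneg : ∀ x ξ, 0 ≤ M x ξ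
  meas : ∀ ξ, Measurable fun x => M x ξ
  cont : ∀ x, ContinuousOn (M x) Sym3
  zero_iff : ∀ x ∈ Ω, ∀ ξ ∈ Sym3, (M x ξ = 0 ↔ ξ = 0)
  even : ∀ x ∈ Ω, ∀ ξ ∈ Sym3, M x (-ξ) = M x ξ
  convexOn : ∀ x, ConvexOn ℝ Sym3 (M x)
  tendsto_zero : ∀ x ∈ Ω,
    Tendsto (fun ξ => M x ξ / mnorm ξ) (nhdsWithin 0 (Sym3 \ {0})) (nhds 0)
  tendsto_top : ∀ x ∈ Ω,
    Tendsto (fun ξ => M x ξ / mnorm ξ) ((comap mnorm atTop) ⊓ Filter.principal Sym3) atTop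

/-- The complementary function `M*(x,η) = sup_{ξ ∈ S³} (ξ:η − M(x,ξ))`. -/
def complFn (M : E3 → Mat3 → ℝ) (x : E3) (η : Mat3) : ℝ :=
  ⨆ ξ : Sym3, (mdot ξ.1 η - M x ξ.1)

/-- `ξᵢ → ξ` modularly in `L_M(Q)`, `Q = Ω × (0,T)`: there is `λ > 0` with
`∫_Q M(x, (ξᵢ−ξ)/λ) dx dt → 0`. -/
def ModularConv (Ω : Set E3) (T : ℝ) (M : E3 → Mat3 → ℝ)
    (ξi : ℕ → E3 × ℝ → Mat3) (ξ : E3 × ℝ → Mat3) : Prop :=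
  ∃ l : ℝ, 0 < l ∧
    Tendsto (fun i => ∫⁻ q in Ω ×ˢ Ioo (0:ℝ) T,
      ENNReal.ofReal (M q.1 (l⁻¹ • (ξi i q - ξ q)))) atTop (nhds 0)

/-!
Write `Φᵢ = Φ + l ξᵢ` and `Ψᵢ = Ψ + m ηᵢ`, where the modulars of `ξᵢ` (for `M`) and of `ηᵢ`
(for `M*`) tend to `0`. Then `Φᵢ:Ψᵢ - Φ:Ψ = lm ξᵢ:ηᵢ + l ξᵢ:Ψ + m Φ:ηᵢ`, and the Fenchel–Young
inequality `|ξ:η| ≤ M(x,ξ) + M*(x,η)` disposes of the first term. By convexity and the bounded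
modulars, `Φ/(1+l)` and `Ψ/(1+m)` have finite modulars. Since `M(x,ζₖ) → 0` forces `ζₖ → 0`
(and likewise for `M*`), a subsequence of `ξᵢ` tends to `0` almost everywhere, and the part of
`|ξᵢ:Ψ|` not already controlled by `M(x,ξᵢ)` is dominated by `M*(x,Ψ/(1+m))`; the third term is
symmetric.
-/

open scoped ENNReal

instance : SecondCountableTopology Mat3 :=
  inferInstanceAs (SecondCountableTopology (Fin 3 → Fin 3 → ℝ))
instance : BorelSpace Mat3 := inferInstanceAs (BorelSpace (Fin 3 → Fin 3 → ℝ))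

/-- `ξ ↦ (ξᵢⱼ)` identifies `Mat3` with `ℝ⁹`, turning `mdot` and `mnorm` into the Euclidean
inner product and norm. -/
def mvec (A : Mat3) : EuclideanSpace ℝ (Fin 3 × Fin 3) := WithLp.toLp 2 fun p => A p.1 p.2

lemma mdot_eq_inner (a b : Mat3) : mdot a b = inner ℝ (mvec a) (mvec b) := by
  simp [mdot, mvec, PiLp.inner_apply, Fintype.sum_prod_type, mul_comm]

lemma mnorm_eq_norm (a : Mat3) : mnorm a = ‖mvec a‖ := by
  rw [mnorm, mdot_eq_inner, real_inner_self_eq_norm_sq, Real.sqrt_sq (norm_nonneg _)]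

lemma abs_mdot_le (a b : Mat3) : |mdot a b| ≤ mnorm a * mnorm b := by
  rw [mdot_eq_inner, mnorm_eq_norm, mnorm_eq_norm]; exact abs_real_inner_le_norm _ _

lemma mnorm_smul (t : ℝ) (a : Mat3) : mnorm (t • a) = |t| * mnorm a := by
  rw [mnorm_eq_norm, mnorm_eq_norm, ← Real.norm_eq_abs, ← norm_smul]; rfl

lemma mnorm_ne_zero {a : Mat3} (ha : a ≠ 0) : mnorm a ≠ 0 := by
  rw [mnorm_eq_norm, norm_ne_zero_iff]
  contrapose! ha
  ext i j
  exact congrFun (congrArg WithLp.ofLp ha) (i, j)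

lemma abs_apply_le_mnorm (a : Mat3) (i j : Fin 3) : |a i j| ≤ mnorm a := by
  rw [mnorm_eq_norm]; exact PiLp.norm_apply_le (mvec a) (i, j)

lemma mnorm_nonneg (a : Mat3) : 0 ≤ mnorm a := Real.sqrt_nonneg _

lemma mdot_comm (a b : Mat3) : mdot a b = mdot b a := by
  simp only [mdot, mul_comm]

lemma mdot_neg_left (a b : Mat3) : mdot (-a) b = -mdot a b := by
  simp [mdot]

lemma mdot_smul_left (t : ℝ) (a b : Mat3) : mdot (t • a) b = t * mdot a b := by
  simp only [mdot, Matrix.smul_apply, smul_eq_mul, Finset.mul_sum, mul_assoc]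

lemma mdot_smul_right (t : ℝ) (a b : Mat3) : mdot a (t • b) = t * mdot a b := by
  rw [mdot_comm, mdot_smul_left, mdot_comm]

lemma mdot_add_right (a b c : Mat3) : mdot a (b + c) = mdot a b + mdot a c := by
  simp only [mdot, Matrix.add_apply, mul_add, Finset.sum_add_distrib]

lemma mdot_sub_mdot (a b c d : Mat3) :
    mdot a b - mdot c d = mdot (a - c) (b - d) + mdot (a - c) d + mdot c (b - d) := by
  simp only [mdot, Matrix.sub_apply, ← Finset.sum_sub_distrib, ← Finset.sum_add_distrib]
  congr! 2; ring

lemma continuous_mdot : Continuous fun p : Mat3 × Mat3 => mdot p.1 p.2 := by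
  unfold mdot; fun_prop

lemma Measurable.mdot {α : Type*} [MeasurableSpace α] {f g : α → Mat3} (hf : Measurable f)
    (hg : Measurable g) : Measurable fun a => mdot (f a) (g a) :=
  continuous_mdot.measurable.comp (hf.prodMk hg)

lemma isClosed_sym3 : IsClosed Sym3 :=
  isClosed_eq (continuous_id.matrix_transpose) continuous_id

lemma zero_mem_sym3 : (0 : Mat3) ∈ Sym3 := Matrix.isSymm_zero

instance : Nonempty Sym3 := ⟨⟨0, zero_mem_sym3⟩⟩

theorem IsCompact.tendsto_of_tendsto_zero {X ι : Type*} [TopologicalSpace X] {l : Filter ι}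
    {F : X → ℝ} {S K : Set X} {x₀ : X} {ζ : ι → X} (hK : IsCompact K) (hS : IsClosed S)
    (hF : ContinuousOn F S) (hF0 : ∀ a ∈ S, F a = 0 → a = x₀) (hζS : ∀ i, ζ i ∈ S)
    (hζK : ∀ᶠ i in l, ζ i ∈ K) (h : Tendsto (F ∘ ζ) l (𝓝 0)) : Tendsto ζ l (𝓝 x₀) := by
  refine (hK.inter_right hS).tendsto_nhds_of_unique_mapClusterPt
    (hζK.mono fun i hi => ⟨hi, hζS i⟩) fun a ⟨_, haS⟩ hζa => hF0 a haS ?_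
  have hFa : MapClusterPt (F a) l (F ∘ ζ) := hζa.tendsto_comp' <|
    (hF a haS).tendsto.mono_left <| inf_le_inf_left _ <|
      le_principal_iff.2 <| mem_map.2 <| univ_mem' hζS
  exact eq_of_nhds_neBot (hFa.clusterPt.mono h)

lemma tendsto_of_tendsto_ofReal_zero {ι : Type*} {l : Filter ι} {u : ι → ℝ} (hu : ∀ i, 0 ≤ u i)
    (h : Tendsto (fun i => ENNReal.ofReal (u i)) l (𝓝 0)) : Tendsto u l (𝓝 0) := by
  simpa [Function.comp_def, ENNReal.toReal_ofReal (hu _)] using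
    (ENNReal.tendsto_toReal ENNReal.zero_ne_top).comp h

lemma tendsto_lintegral_abs_mdot_of_smul {α : Type*} [MeasurableSpace α] {μ : Measure α}
    {A B : ℕ → α → Mat3} {s t : ℝ} (hs : 0 < s) (ht : 0 < t)
    (h : Tendsto (fun i => ∫⁻ a, ENNReal.ofReal |mdot (s⁻¹ • A i a) (t⁻¹ • B i a)| ∂μ)
      atTop (𝓝 0)) :
    Tendsto (fun i => ∫⁻ a, ENNReal.ofReal |mdot (A i a) (B i a)| ∂μ) atTop (𝓝 0) := by
  have hscale : ∀ i, ∫⁻ a, ENNReal.ofReal |mdot (A i a) (B i a)| ∂μ =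
      ENNReal.ofReal (s * t) * ∫⁻ a, ENNReal.ofReal |mdot (s⁻¹ • A i a) (t⁻¹ • B i a)| ∂μ := by
    intro i
    rw [← lintegral_const_mul' _ _ ENNReal.ofReal_ne_top]
    congr 1 with a
    rw [← ENNReal.ofReal_mul (by positivity), mdot_smul_left, mdot_smul_right, abs_mul, abs_mul,
      abs_of_pos (inv_pos.2 hs), abs_of_pos (inv_pos.2 ht)]
    field_simp
  simpa [hscale] using ENNReal.Tendsto.const_mul h (Or.inr ENNReal.ofReal_ne_top)

section Lebesgue

variable {α : Type*} [MeasurableSpace α] {μ : Measure α}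

theorem exists_strictMono_ae_tendsto_zero_of_lintegral {g : ℕ → α → ℝ≥0∞}
    (hg : ∀ i, AEMeasurable (g i) μ) (h : Tendsto (fun i => ∫⁻ a, g i a ∂μ) atTop (𝓝 0)) :
    ∃ φ : ℕ → ℕ, StrictMono φ ∧ ∀ᵐ a ∂μ, Tendsto (fun k => g (φ k) a) atTop (𝓝 0) := by
  obtain ⟨φ, hφ, hφg⟩ := extraction_forall_of_eventually fun k =>
    h.eventually (gt_mem_nhds (ENNReal.pow_pos (by norm_num : (0 : ℝ≥0∞) < 2⁻¹) k))
  refine ⟨φ, hφ, ?_⟩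
  have hsum : ∫⁻ a, ∑' k, g (φ k) a ∂μ ≠ ∞ := by
    rw [lintegral_tsum fun k => hg _]
    refine ne_top_of_le_ne_top ?_ (ENNReal.tsum_le_tsum fun k => (hφg k).le)
    simp
  filter_upwards [ae_lt_top' (AEMeasurable.tsum fun k => hg _) hsum] with a ha
  exact ENNReal.tendsto_atTop_zero_of_tsum_ne_top ha.ne

theorem tendsto_lintegral_of_le_add {f g : ℕ → α → ℝ≥0∞} {h : α → ℝ≥0∞}
    (hf : ∀ i, AEMeasurable (f i) μ) (hg : ∀ i, AEMeasurable (g i) μ) (hh : ∫⁻ a, h a ∂μ ≠ ∞)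
    (hfgh : ∀ i, f i ≤ᵐ[μ] g i + h) (hg0 : Tendsto (fun i => ∫⁻ a, g i a ∂μ) atTop (𝓝 0))
    (hfg : ∀ᵐ a ∂μ, ∀ φ : ℕ → ℕ, Tendsto (fun k => g (φ k) a) atTop (𝓝 0) →
      Tendsto (fun k => f (φ k) a) atTop (𝓝 0)) :
    Tendsto (fun i => ∫⁻ a, f i a ∂μ) atTop (𝓝 0) := by
  refine tendsto_of_subseq_tendsto fun ns hns => ?_
  obtain ⟨φ, hφ, hgφ⟩ := exists_strictMono_ae_tendsto_zero_of_lintegral (fun k => hg (ns k))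
    (hg0.comp hns)
  refine ⟨φ, ?_⟩
  -- `f ≤ g + (f - g)`, and `f - g` is dominated by the integrable `h` and tends to `0` a.e.
  have hdiff : Tendsto (fun k => ∫⁻ a, f (ns (φ k)) a - g (ns (φ k)) a ∂μ) atTop (𝓝 0) := by
    simpa using tendsto_lintegral_of_dominated_convergence' (f := 0) h
      (fun _ => (hf _).sub (hg _))
      (fun _ => (hfgh _).mono fun _ ha => tsub_le_iff_left.2 ha) hh <| by
        filter_upwards [hgφ, hfg] with a hga hfa
        exact tendsto_of_tendsto_of_tendsto_of_le_of_le tendsto_const_nhds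
          (hfa (fun k => ns (φ k)) hga) (fun _ => zero_le) fun _ => tsub_le_self
  have hgsub := hg0.comp (hns.comp hφ.tendsto_atTop)
  refine tendsto_of_tendsto_of_tendsto_of_le_of_le tendsto_const_nhds
    (by simpa using hgsub.add hdiff) (fun _ => zero_le) fun k => ?_
  calc ∫⁻ a, f (ns (φ k)) a ∂μ
      ≤ ∫⁻ a, g (ns (φ k)) a + (f (ns (φ k)) a - g (ns (φ k)) a) ∂μ :=
        lintegral_mono fun a => le_add_tsub
    _ = _ := lintegral_add_left' (hg _) _

end Lebesgue

/-- What the argument uses of both `M` and `M*`. -/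
structure IsOrliczIntegrand (Ω : Set E3) (F : E3 → Mat3 → ℝ) : Prop where
  measurable : Measurable fun p : E3 × Sym3 => F p.1 p.2
  nonneg : ∀ x ∈ Ω, ∀ ξ ∈ Sym3, 0 ≤ F x ξ
  convexOn : ∀ x ∈ Ω, ConvexOn ℝ Sym3 (F x)
  even : ∀ x ∈ Ω, ∀ ξ ∈ Sym3, F x (-ξ) = F x ξ
  tendsto_nhds_zero : ∀ x ∈ Ω, ∀ ζ : ℕ → Mat3, (∀ k, ζ k ∈ Sym3) →
    Tendsto (fun k => F x (ζ k)) atTop (𝓝 0) → Tendsto ζ atTop (𝓝 0)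

def IsYoungPair (Ω : Set E3) (F G : E3 → Mat3 → ℝ) : Prop :=
  ∀ x ∈ Ω, ∀ a ∈ Sym3, ∀ b ∈ Sym3, |mdot a b| ≤ F x a + G x b

lemma IsYoungPair.symm {Ω : Set E3} {F G : E3 → Mat3 → ℝ} (h : IsYoungPair Ω F G) :
    IsYoungPair Ω G F := fun x hx a ha b hb => by
  rw [mdot_comm, add_comm]; exact h x hx b hb a ha

section NFunction

variable {Ω : Set E3} {M : E3 → Mat3 → ℝ} {x : E3}

lemma IsNFunction.apply_zero (hM : IsNFunction Ω M) (hx : x ∈ Ω) : M x 0 = 0 :=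
  (hM.zero_iff x hx 0 zero_mem_sym3).2 rfl

lemma IsNFunction.exists_mul_mnorm_le (hM : IsNFunction Ω M) (hx : x ∈ Ω) (c : ℝ) :
    ∃ R, ∀ ξ ∈ Sym3, R ≤ mnorm ξ → c * mnorm ξ ≤ M x ξ := by
  obtain ⟨R, hR⟩ := eventually_atTop.1 <| eventually_comap.1 <| eventually_inf_principal.1 <|
    (hM.tendsto_top x hx).eventually (eventually_ge_atTop c)
  refine ⟨max R 1, fun ξ hξ hξR => ?_⟩
  have hpos : 0 < mnorm ξ := lt_of_lt_of_le one_pos (le_of_max_le_right hξR)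
  exact (le_div_iff₀ hpos).1 (hR _ (le_of_max_le_left hξR) ξ rfl hξ)

lemma IsNFunction.bddAbove_range (hM : IsNFunction Ω M) (hx : x ∈ Ω) (η : Mat3) :
    BddAbove (range fun ξ : Sym3 => mdot ξ.1 η - M x ξ.1) := by
  obtain ⟨R, hR⟩ := hM.exists_mul_mnorm_le hx (mnorm η)
  refine ⟨max (R * mnorm η) 0, ?_⟩
  rintro _ ⟨⟨ξ, hξ⟩, rfl⟩
  have hCS : mdot ξ η ≤ mnorm ξ * mnorm η := (abs_le.1 (abs_mdot_le ξ η)).2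
  rcases le_total R (mnorm ξ) with hRξ | hξR
  · have := hR ξ hξ hRξ
    exact le_max_of_le_right (by nlinarith)
  · have := hM.nonneg x ξ
    exact le_max_of_le_left (by nlinarith [mnorm_nonneg η])

lemma IsNFunction.le_complFn (hM : IsNFunction Ω M) (hx : x ∈ Ω) {ξ : Mat3} (hξ : ξ ∈ Sym3)
    (η : Mat3) : mdot ξ η - M x ξ ≤ complFn M x η :=
  le_ciSup (hM.bddAbove_range hx η) ⟨ξ, hξ⟩

lemma IsNFunction.abs_mdot_le (hM : IsNFunction Ω M) (hx : x ∈ Ω) {ξ : Mat3} (hξ : ξ ∈ Sym3)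
    (η : Mat3) : |mdot ξ η| ≤ M x ξ + complFn M x η := by
  have h₁ := hM.le_complFn hx hξ η
  have h₂ := hM.le_complFn hx hξ.neg η
  rw [mdot_neg_left, hM.even x hx ξ hξ] at h₂
  exact abs_le.2 ⟨by linarith, by linarith⟩

lemma IsNFunction.complFn_nonneg (hM : IsNFunction Ω M) (hx : x ∈ Ω) (η : Mat3) :
    0 ≤ complFn M x η := by
  simpa [mdot, hM.apply_zero hx] using hM.le_complFn hx zero_mem_sym3 η

lemma IsNFunction.complFn_neg (hM : IsNFunction Ω M) (hx : x ∈ Ω) (η : Mat3) :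
    complFn M x (-η) = complFn M x η := by
  suffices h : ∀ η, complFn M x (-η) ≤ complFn M x η from
    le_antisymm (h η) (by simpa using h (-η))
  refine fun η => ciSup_le fun ⟨ξ, hξ⟩ => ?_
  have := hM.le_complFn hx hξ.neg η
  rwa [mdot_neg_left, hM.even x hx ξ hξ, mdot_comm, ← mdot_neg_left, mdot_comm] at this

lemma IsNFunction.convexOn_complFn (hM : IsNFunction Ω M) (hx : x ∈ Ω) :
    ConvexOn ℝ Sym3 (complFn M x) := by
  refine ⟨(hM.convexOn x).1, fun a _ b _ s t hs ht hst => ciSup_le fun ξ => ?_⟩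
  have ha := mul_le_mul_of_nonneg_left (hM.le_complFn hx ξ.2 a) hs
  have hb := mul_le_mul_of_nonneg_left (hM.le_complFn hx ξ.2 b) ht
  rw [mdot_add_right, mdot_smul_right, mdot_smul_right, smul_eq_mul, smul_eq_mul]
  linear_combination ha + hb + M x ξ * hst

lemma IsNFunction.measurable_complFn (hM : IsNFunction Ω M) :
    Measurable fun p : E3 × Mat3 => complFn M p.1 p.2 := by
  obtain ⟨S, hSc, hSd⟩ := TopologicalSpace.exists_countable_dense Sym3
  have : Countable S := hSc.to_subtype
  have hsup : ∀ p : E3 × Mat3, complFn M p.1 p.2 = ⨆ ξ : S, (mdot ξ.1.1 p.2 - M p.1 ξ.1.1) :=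
    fun p => (hSd.ciSup' ((continuous_mdot.comp (continuous_subtype_val.prodMk
      continuous_const)).sub (hM.cont p.1).domRestrict)).symm
  simp_rw [hsup]
  exact Measurable.iSup fun ξ => (continuous_mdot.comp (continuous_const.prodMk
    continuous_snd)).measurable.sub ((hM.meas ξ.1.1).comp measurable_fst)

lemma IsNFunction.tendsto_nhds_zero (hM : IsNFunction Ω M) (hx : x ∈ Ω) {ζ : ℕ → Mat3}
    (hζ : ∀ k, ζ k ∈ Sym3) (h : Tendsto (fun k => M x (ζ k)) atTop (𝓝 0)) :
    Tendsto ζ atTop (𝓝 0) := by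
  obtain ⟨R, hR⟩ := hM.exists_mul_mnorm_le hx 2
  set r := max R 1
  set K : Set Mat3 := univ.pi fun _ => univ.pi fun _ => Icc (-r) r
  have hK : IsCompact K := isCompact_univ_pi fun _ => isCompact_univ_pi fun _ => isCompact_Icc
  have hsub : ∀ ξ ∈ Sym3, M x ξ < 1 → ξ ∈ K := by
    intro ξ hξ hM1
    have hξr : mnorm ξ ≤ r := by
      by_contra! hrξ
      have := hR ξ hξ ((le_max_left R 1).trans hrξ.le)
      nlinarith [le_max_right R 1]
    exact fun i _ j _ => abs_le.1 ((abs_apply_le_mnorm ξ i j).trans hξr)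
  refine hK.tendsto_of_tendsto_zero isClosed_sym3 (hM.cont x)
    (fun a ha => (hM.zero_iff x hx a ha).1) hζ ?_ h
  filter_upwards [h.eventually (gt_mem_nhds one_pos)] with k hk using hsub _ (hζ k) hk

lemma IsNFunction.tendsto_div_smul (hM : IsNFunction Ω M) (hx : x ∈ Ω) {s : Mat3}
    (hs : s ∈ Sym3) : Tendsto (fun t => M x (t • s) / t) (𝓝[>] 0) (𝓝 0) := by
  rcases eq_or_ne s 0 with rfl | hs0
  · simp [hM.apply_zero hx]
  have hcurve : Tendsto (fun t : ℝ => t • s) (𝓝[>] 0) (𝓝[Sym3 \ {0}] 0) := by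
    refine tendsto_nhdsWithin_iff.2 ⟨?_, ?_⟩
    · have hc : Continuous fun t : ℝ => t • s := by fun_prop
      exact (hc.tendsto' 0 0 (zero_smul ℝ s)).mono_left nhdsWithin_le_nhds
    · filter_upwards [self_mem_nhdsWithin] with t (ht : 0 < t)
      exact ⟨hs.smul t, smul_ne_zero ht.ne' hs0⟩
  have hlim := ((hM.tendsto_zero x hx).comp hcurve).const_mul (mnorm s)
  rw [mul_zero] at hlim
  refine hlim.congr' ?_
  filter_upwards [self_mem_nhdsWithin] with t (ht : 0 < t)
  have := mnorm_ne_zero hs0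
  simp only [Function.comp_apply, mnorm_smul, abs_of_pos ht]
  field_simp

lemma IsNFunction.tendsto_nhds_zero_of_complFn (hM : IsNFunction Ω M) (hx : x ∈ Ω)
    {η : ℕ → Mat3} (hη : ∀ k, η k ∈ Sym3) (h : Tendsto (fun k => complFn M x (η k)) atTop (𝓝 0)) :
    Tendsto η atTop (𝓝 0) := by
  refine tendsto_pi_nhds.2 fun a => tendsto_pi_nhds.2 fun b => Metric.tendsto_nhds.2 fun ε hε => ?_
  set s : Mat3 := Matrix.single a b 1 + Matrix.single b a 1
  have hs : s ∈ Sym3 := by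
    simp [s, Sym3, Matrix.IsSymm, Matrix.transpose_add, Matrix.transpose_single, add_comm]
  have hdot : ∀ k, mdot s (η k) = 2 * η k a b := by
    intro k
    have : η k b a = η k a b := congrFun (congrFun (hη k) a) b
    simp [s, mdot, Matrix.add_apply, Matrix.single_apply, add_mul, Finset.sum_add_distrib,
      this, two_mul, ite_and]
  -- Fenchel–Young against `t • s` gives `2t |η_ab| ≤ M(x,ts) + M*(x,η)`, and `M(x,ts)/t → 0`.
  obtain ⟨t, hMt, ht⟩ :=
    ((hM.tendsto_div_smul hx hs).eventually (gt_mem_nhds hε)).and self_mem_nhdsWithin |>.exists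
  have ht : (0 : ℝ) < t := ht
  filter_upwards [h.eventually (gt_mem_nhds (mul_pos ht hε))] with k hk
  have hFY := hM.abs_mdot_le hx (hs.smul t) (η k)
  rw [mdot_smul_left, hdot, abs_mul, abs_mul, abs_of_pos ht, abs_two] at hFY
  rw [div_lt_iff₀ ht] at hMt
  rw [Real.dist_eq, Matrix.zero_apply, sub_zero]
  nlinarith

lemma IsNFunction.isYoungPair (hM : IsNFunction Ω M) : IsYoungPair Ω M (complFn M) :=
  fun _ hx _ ha b _ => hM.abs_mdot_le hx ha b

lemma IsNFunction.isOrliczIntegrand (hM : IsNFunction Ω M) : IsOrliczIntegrand Ω M where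
  measurable := (measurable_uncurry_of_continuous_of_measurable
    (fun x => (hM.cont x).domRestrict) fun ξ : Sym3 => hM.meas ξ).comp measurable_swap
  nonneg x _ ξ _ := hM.nonneg x ξ
  convexOn x _ := hM.convexOn x
  even := hM.even
  tendsto_nhds_zero _ hx _ := hM.tendsto_nhds_zero hx

lemma IsNFunction.isOrliczIntegrand_complFn (hM : IsNFunction Ω M) :
    IsOrliczIntegrand Ω (complFn M) where
  measurable := hM.measurable_complFn.comp (f := fun p : E3 × Sym3 => (p.1, p.2.1))
    (measurable_fst.prodMk (measurable_subtype_coe.comp measurable_snd))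
  nonneg _ hx ξ _ := hM.complFn_nonneg hx ξ
  convexOn _ hx := hM.convexOn_complFn hx
  even _ hx ξ _ := hM.complFn_neg hx ξ
  tendsto_nhds_zero _ hx _ := hM.tendsto_nhds_zero_of_complFn hx

end NFunction


namespace IsOrliczIntegrand

variable {Ω : Set E3} {F G : E3 → Mat3 → ℝ} {x : E3} {ν : Measure (E3 × ℝ)}

lemma measurable_comp (hF : IsOrliczIntegrand Ω F) {f : E3 × ℝ → Mat3} (hf : Measurable f)
    (hfs : ∀ q, f q ∈ Sym3) : Measurable fun q => F q.1 (f q) :=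
  hF.measurable.comp (measurable_fst.prodMk (hf.subtype_mk (h := hfs)))

/-- Writing `(1 + l)⁻¹ b = (1 + l)⁻¹ a + l (1 + l)⁻¹ (-(a - b) / l)` as a convex combination. -/
lemma apply_inv_one_add_smul_le (hF : IsOrliczIntegrand Ω F) (hx : x ∈ Ω) {a b : Mat3}
    (ha : a ∈ Sym3) (hb : b ∈ Sym3) {l : ℝ} (hl : 0 < l) :
    F x ((1 + l)⁻¹ • b) ≤ F x a + F x (l⁻¹ • (a - b)) := by
  have hd : l⁻¹ • (a - b) ∈ Sym3 := (ha.sub hb).smul _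
  have hcomb : (1 + l)⁻¹ • a + (l * (1 + l)⁻¹) • -(l⁻¹ • (a - b)) = (1 + l)⁻¹ • b := by
    rw [smul_neg, smul_smul, mul_assoc, mul_comm _ l⁻¹, ← mul_assoc, mul_inv_cancel₀ hl.ne',
      one_mul, smul_sub]
    abel
  have hsum : (1 + l)⁻¹ + l * (1 + l)⁻¹ = 1 := by field_simp
  have hconv := (hF.convexOn x hx).2 ha hd.neg (by positivity) (by positivity) hsum
  rw [hcomb, hF.even x hx _ hd, smul_eq_mul, smul_eq_mul] at hconv
  have hw₁ : (1 + l)⁻¹ ≤ 1 := inv_le_one_of_one_le₀ (by linarith)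
  have hw₂ : l * (1 + l)⁻¹ ≤ 1 := by rw [← div_eq_mul_inv, div_le_one (by linarith)]; linarith
  nlinarith [hF.nonneg x hx a ha, hF.nonneg x hx _ hd]

lemma lintegral_inv_one_add_smul_ne_top (hF : IsOrliczIntegrand Ω F) (hae : ∀ᵐ q ∂ν, q.1 ∈ Ω)
    {Ψi : ℕ → E3 × ℝ → Mat3} {Ψ : E3 × ℝ → Mat3} (hΨim : ∀ i, Measurable (Ψi i))
    (hΨis : ∀ i q, Ψi i q ∈ Sym3) (hΨs : ∀ q, Ψ q ∈ Sym3)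
    (hfin : ∀ i, ∫⁻ q, ENNReal.ofReal (F q.1 (Ψi i q)) ∂ν ≠ ∞) {l : ℝ} (hl : 0 < l)
    (hmod : Tendsto (fun i => ∫⁻ q, ENNReal.ofReal (F q.1 (l⁻¹ • (Ψi i q - Ψ q))) ∂ν)
      atTop (𝓝 0)) :
    ∫⁻ q, ENNReal.ofReal (F q.1 ((1 + l)⁻¹ • Ψ q)) ∂ν ≠ ∞ := by
  obtain ⟨i, hi⟩ := (hmod.eventually (gt_mem_nhds zero_lt_one)).exists
  refine ne_top_of_le_ne_top (ENNReal.add_ne_top.2 ⟨hfin i, (hi.trans ENNReal.one_lt_top).ne⟩) ?_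
  rw [← lintegral_add_left (hF.measurable_comp (hΨim i) (hΨis i)).ennreal_ofReal]
  refine lintegral_mono_ae (hae.mono fun q hq => ?_)
  exact (ENNReal.ofReal_le_ofReal (hF.apply_inv_one_add_smul_le hq (hΨis i q) (hΨs q) hl)).trans
    ENNReal.ofReal_add_le

lemma tendsto_lintegral_abs_mdot_of_tendsto_modulars (hF : IsOrliczIntegrand Ω F)
    (hFG : IsYoungPair Ω F G)
    (hae : ∀ᵐ q ∂ν, q.1 ∈ Ω) {ξ η : ℕ → E3 × ℝ → Mat3} (hξm : ∀ i, Measurable (ξ i))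
    (hξs : ∀ i q, ξ i q ∈ Sym3) (hηs : ∀ i q, η i q ∈ Sym3)
    (hξ : Tendsto (fun i => ∫⁻ q, ENNReal.ofReal (F q.1 (ξ i q)) ∂ν) atTop (𝓝 0))
    (hη : Tendsto (fun i => ∫⁻ q, ENNReal.ofReal (G q.1 (η i q)) ∂ν) atTop (𝓝 0)) :
    Tendsto (fun i => ∫⁻ q, ENNReal.ofReal |mdot (ξ i q) (η i q)| ∂ν) atTop (𝓝 0) := by
  refine tendsto_of_tendsto_of_tendsto_of_le_of_le tendsto_const_nhds
    (by simpa using hξ.add hη) (fun _ => zero_le) fun i => ?_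
  rw [← lintegral_add_left (hF.measurable_comp (hξm i) (hξs i)).ennreal_ofReal]
  refine lintegral_mono_ae (hae.mono fun q hq => ?_)
  exact (ENNReal.ofReal_le_ofReal (hFG q.1 hq _ (hξs i q) _ (hηs i q))).trans
    ENNReal.ofReal_add_le

lemma tendsto_lintegral_abs_mdot_of_tendsto_modular (hF : IsOrliczIntegrand Ω F)
    (hFG : IsYoungPair Ω F G)
    (hae : ∀ᵐ q ∂ν, q.1 ∈ Ω) {ξ : ℕ → E3 × ℝ → Mat3} {Ψ : E3 × ℝ → Mat3}
    (hξm : ∀ i, Measurable (ξ i)) (hΨm : Measurable Ψ) (hξs : ∀ i q, ξ i q ∈ Sym3)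
    (hΨs : ∀ q, Ψ q ∈ Sym3)
    (hξ : Tendsto (fun i => ∫⁻ q, ENNReal.ofReal (F q.1 (ξ i q)) ∂ν) atTop (𝓝 0))
    (hΨ : ∫⁻ q, ENNReal.ofReal (G q.1 (Ψ q)) ∂ν ≠ ∞) :
    Tendsto (fun i => ∫⁻ q, ENNReal.ofReal |mdot (ξ i q) (Ψ q)| ∂ν) atTop (𝓝 0) := by
  refine tendsto_lintegral_of_le_add (fun i => ((hξm i).mdot hΨm).abs.ennreal_ofReal.aemeasurable)
    (fun i => (hF.measurable_comp (hξm i) (hξs i)).ennreal_ofReal.aemeasurable) hΨ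
    (fun i => hae.mono fun q hq => ?_) hξ ?_
  · exact (ENNReal.ofReal_le_ofReal (hFG q.1 hq _ (hξs i q) _ (hΨs q))).trans
      ENNReal.ofReal_add_le
  filter_upwards [hae] with q hq φ hφ
  have hξ0 := hF.tendsto_nhds_zero q.1 hq _ (fun k => hξs _ q)
    (tendsto_of_tendsto_ofReal_zero (fun k => hF.nonneg q.1 hq _ (hξs _ q)) hφ)
  have hdot : Tendsto (fun k => mdot (ξ (φ k) q) (Ψ q)) atTop (𝓝 0) := by
    simpa [Function.comp_def, mdot] using
      (continuous_mdot.tendsto (0, Ψ q)).comp (hξ0.prodMk_nhds tendsto_const_nhds)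
  simpa using ENNReal.tendsto_ofReal hdot.abs

lemma tendsto_lintegral_abs_mdot_sub_sub (hF : IsOrliczIntegrand Ω F) (hFG : IsYoungPair Ω F G)
    (hae : ∀ᵐ q ∂ν, q.1 ∈ Ω) {Φi Ψi : ℕ → E3 × ℝ → Mat3} {Φ Ψ : E3 × ℝ → Mat3}
    (hΦim : ∀ i, Measurable (Φi i)) (hΦm : Measurable Φ) (hΦis : ∀ i q, Φi i q ∈ Sym3)
    (hΨis : ∀ i q, Ψi i q ∈ Sym3) (hΦs : ∀ q, Φ q ∈ Sym3) (hΨs : ∀ q, Ψ q ∈ Sym3)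
    {l m : ℝ} (hl : 0 < l) (hm : 0 < m)
    (hΦ : Tendsto (fun i => ∫⁻ q, ENNReal.ofReal (F q.1 (l⁻¹ • (Φi i q - Φ q))) ∂ν)
      atTop (𝓝 0))
    (hΨ : Tendsto (fun i => ∫⁻ q, ENNReal.ofReal (G q.1 (m⁻¹ • (Ψi i q - Ψ q))) ∂ν)
      atTop (𝓝 0)) :
    Tendsto (fun i => ∫⁻ q, ENNReal.ofReal |mdot (Φi i q - Φ q) (Ψi i q - Ψ q)| ∂ν)
      atTop (𝓝 0) :=
  tendsto_lintegral_abs_mdot_of_smul hl hm <|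
    hF.tendsto_lintegral_abs_mdot_of_tendsto_modulars hFG hae
      (fun i => ((hΦim i).sub hΦm).const_smul l⁻¹) (fun i q => ((hΦis i q).sub (hΦs q)).smul _)
      (fun i q => ((hΨis i q).sub (hΨs q)).smul _) hΦ hΨ

lemma tendsto_lintegral_abs_mdot_sub (hF : IsOrliczIntegrand Ω F) (hFG : IsYoungPair Ω F G)
    (hae : ∀ᵐ q ∂ν, q.1 ∈ Ω) {Φi : ℕ → E3 × ℝ → Mat3} {Φ Ψ : E3 × ℝ → Mat3}
    (hΦim : ∀ i, Measurable (Φi i)) (hΦm : Measurable Φ) (hΨm : Measurable Ψ)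
    (hΦis : ∀ i q, Φi i q ∈ Sym3) (hΦs : ∀ q, Φ q ∈ Sym3) (hΨs : ∀ q, Ψ q ∈ Sym3)
    {l c : ℝ} (hl : 0 < l) (hc : 0 < c)
    (hΦ : Tendsto (fun i => ∫⁻ q, ENNReal.ofReal (F q.1 (l⁻¹ • (Φi i q - Φ q))) ∂ν)
      atTop (𝓝 0))
    (hΨ : ∫⁻ q, ENNReal.ofReal (G q.1 (c⁻¹ • Ψ q)) ∂ν ≠ ∞) :
    Tendsto (fun i => ∫⁻ q, ENNReal.ofReal |mdot (Φi i q - Φ q) (Ψ q)| ∂ν) atTop (𝓝 0) :=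
  tendsto_lintegral_abs_mdot_of_smul hl hc <|
    hF.tendsto_lintegral_abs_mdot_of_tendsto_modular hFG hae
      (fun i => ((hΦim i).sub hΦm).const_smul l⁻¹) (hΨm.const_smul c⁻¹)
      (fun i q => ((hΦis i q).sub (hΦs q)).smul _) (fun q => (hΨs q).smul _) hΦ hΨ

end IsOrliczIntegrand

lemma tendsto_lintegral_abs_mdot_sub_mdot {α : Type*} [MeasurableSpace α] {μ : Measure α}
    {Φi Ψi : ℕ → α → Mat3} {Φ Ψ : α → Mat3} (hΦim : ∀ i, Measurable (Φi i))
    (hΨim : ∀ i, Measurable (Ψi i)) (hΦm : Measurable Φ) (hΨm : Measurable Ψ)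
    (h₁ : Tendsto (fun i => ∫⁻ a, ENNReal.ofReal |mdot (Φi i a - Φ a) (Ψi i a - Ψ a)| ∂μ)
      atTop (𝓝 0))
    (h₂ : Tendsto (fun i => ∫⁻ a, ENNReal.ofReal |mdot (Φi i a - Φ a) (Ψ a)| ∂μ) atTop (𝓝 0))
    (h₃ : Tendsto (fun i => ∫⁻ a, ENNReal.ofReal |mdot (Φ a) (Ψi i a - Ψ a)| ∂μ) atTop (𝓝 0)) :
    Tendsto (fun i => ∫⁻ a, ENNReal.ofReal |mdot (Φi i a) (Ψi i a) - mdot (Φ a) (Ψ a)| ∂μ)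
      atTop (𝓝 0) := by
  refine tendsto_of_tendsto_of_tendsto_of_le_of_le tendsto_const_nhds
    (by simpa using (h₁.add h₂).add h₃) (fun _ => zero_le) fun i => ?_
  have hm₁ : Measurable fun a => ENNReal.ofReal |mdot (Φi i a - Φ a) (Ψi i a - Ψ a)| :=
    (((hΦim i).sub hΦm).mdot ((hΨim i).sub hΨm)).abs.ennreal_ofReal
  have hm₂ : Measurable fun a => ENNReal.ofReal |mdot (Φi i a - Φ a) (Ψ a)| :=
    (((hΦim i).sub hΦm).mdot hΨm).abs.ennreal_ofReal
  have hm₁₂ : Measurable fun a => ENNReal.ofReal |mdot (Φi i a - Φ a) (Ψi i a - Ψ a)| +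
      ENNReal.ofReal |mdot (Φi i a - Φ a) (Ψ a)| := hm₁.add hm₂
  rw [← lintegral_add_left hm₁, ← lintegral_add_left hm₁₂]
  refine lintegral_mono fun a => ?_
  rw [mdot_sub_mdot]
  exact (ENNReal.ofReal_le_ofReal (abs_add_three _ _ _)).trans
    (ENNReal.ofReal_add_le.trans (add_le_add ENNReal.ofReal_add_le le_rfl))

theorem product_strong_L1_of_modularConv_general
    (Ω : Set E3) (hΩo : IsOpen Ω)
    (T : ℝ)
    (M : E3 → Mat3 → ℝ) (hM : IsNFunction Ω M)
    (Φi Ψi : ℕ → E3 × ℝ → Mat3) (Φ Ψ : E3 × ℝ → Mat3)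
    (hΦim : ∀ i, Measurable (Φi i)) (hΨim : ∀ i, Measurable (Ψi i))
    (hΦm : Measurable Φ) (hΨm : Measurable Ψ)
    (hΦis : ∀ i q, Φi i q ∈ Sym3) (hΨis : ∀ i q, Ψi i q ∈ Sym3)
    (hΦs : ∀ q, Φ q ∈ Sym3) (hΨs : ∀ q, Ψ q ∈ Sym3)
    (hΦb : ∃ C : ENNReal, C < ⊤ ∧ ∀ i,
      ∫⁻ q in Ω ×ˢ Ioo (0:ℝ) T, ENNReal.ofReal (M q.1 (Φi i q)) ≤ C)
    (hΨb : ∃ C : ENNReal, C < ⊤ ∧ ∀ i,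
      ∫⁻ q in Ω ×ˢ Ioo (0:ℝ) T, ENNReal.ofReal (complFn M q.1 (Ψi i q)) ≤ C)
    (hΦmod : ModularConv Ω T M Φi Φ)
    (hΨmod : ModularConv Ω T (complFn M) Ψi Ψ) :
    Tendsto (fun i => ∫⁻ q in Ω ×ˢ Ioo (0:ℝ) T,
      ENNReal.ofReal |mdot (Φi i q) (Ψi i q) - mdot (Φ q) (Ψ q)|) atTop (nhds 0) := by
  obtain ⟨l, hl, hΦmod⟩ := hΦmod
  obtain ⟨m, hm, hΨmod⟩ := hΨmod
  obtain ⟨CΦ, hCΦ, hΦb⟩ := hΦb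
  obtain ⟨CΨ, hCΨ, hΨb⟩ := hΨb
  have hae : ∀ᵐ q ∂volume.restrict (Ω ×ˢ Ioo (0:ℝ) T), q.1 ∈ Ω :=
    (ae_restrict_mem (hΩo.measurableSet.prod measurableSet_Ioo)).mono fun q hq => hq.1
  have hF := hM.isOrliczIntegrand
  have hG := hM.isOrliczIntegrand_complFn
  have hΦL := hF.lintegral_inv_one_add_smul_ne_top hae hΦim hΦis hΦs
    (fun i => ((hΦb i).trans_lt hCΦ).ne) hl hΦmod
  have hΨL := hG.lintegral_inv_one_add_smul_ne_top hae hΨim hΨis hΨs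
    (fun i => ((hΨb i).trans_lt hCΨ).ne) hm hΨmod
  refine tendsto_lintegral_abs_mdot_sub_mdot hΦim hΨim hΦm hΨm ?_ ?_ ?_
  · exact hF.tendsto_lintegral_abs_mdot_sub_sub hM.isYoungPair hae hΦim hΦm hΦis hΨis hΦs hΨs
      hl hm hΦmod hΨmod
  · exact hF.tendsto_lintegral_abs_mdot_sub hM.isYoungPair hae hΦim hΦm hΨm hΦis hΦs hΨs
      hl (add_pos one_pos hm) hΦmod hΨL
  · simpa only [mdot_comm (Φ _)] using hG.tendsto_lintegral_abs_mdot_sub hM.isYoungPair.symm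
      hae hΨim hΨm hΦm hΨis hΨs hΦs hm (add_pos one_pos hl) hΨmod hΦL

/-- **Products of modularly convergent sequences converge in `L¹`**: if `Φᵢ` and `Ψᵢ`
have uniformly bounded modulars in `L_M(Q)` and `L_{M*}(Q)` respectively,
`Φᵢ → Φ` modularly in `L_M(Q)` and `Ψᵢ → Ψ` modularly in `L_{M*}(Q)`, then
`Φᵢ:Ψᵢ → Φ:Ψ` strongly in `L¹(Q)`. -/
theorem product_strong_L1_of_modularConv
    (Ω : Set E3) (hΩo : IsOpen Ω) (hΩb : Bornology.IsBounded Ω)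
    (T : ℝ) (hT : 0 < T)
    (M : E3 → Mat3 → ℝ) (hM : IsNFunction Ω M)
    (Φi Ψi : ℕ → E3 × ℝ → Mat3) (Φ Ψ : E3 × ℝ → Mat3)
    (hΦim : ∀ i, Measurable (Φi i)) (hΨim : ∀ i, Measurable (Ψi i))
    (hΦm : Measurable Φ) (hΨm : Measurable Ψ)
    (hΦis : ∀ i q, Φi i q ∈ Sym3) (hΨis : ∀ i q, Ψi i q ∈ Sym3)
    (hΦs : ∀ q, Φ q ∈ Sym3) (hΨs : ∀ q, Ψ q ∈ Sym3)
    (hΦb : ∃ C : ENNReal, C < ⊤ ∧ ∀ i,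
      ∫⁻ q in Ω ×ˢ Ioo (0:ℝ) T, ENNReal.ofReal (M q.1 (Φi i q)) ≤ C)
    (hΨb : ∃ C : ENNReal, C < ⊤ ∧ ∀ i,
      ∫⁻ q in Ω ×ˢ Ioo (0:ℝ) T, ENNReal.ofReal (complFn M q.1 (Ψi i q)) ≤ C)
    (hΦmod : ModularConv Ω T M Φi Φ)
    (hΨmod : ModularConv Ω T (complFn M) Ψi Ψ) :
    Tendsto (fun i => ∫⁻ q in Ω ×ˢ Ioo (0:ℝ) T,
      ENNReal.ofReal |mdot (Φi i q) (Ψi i q) - mdot (Φ q) (Ψ q)|) atTop (nhds 0) :=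
  product_strong_L1_of_modularConv_general Ω hΩo T M hM Φi Ψi Φ Ψ hΦim hΨim hΦm hΨm hΦis hΨis hΦs
    hΨs hΦb hΨb hΦmod hΨmod
end
end

section
/- From biting convergence to weak L¹ convergence: let a_n ∈ L¹(Q) and let a₀ ∈ L¹(Q) be nonnegative with a_n ≥ −a₀ a.e. for all n. Suppose a_n converges to a ∈ L¹(Q) in the biting sense, and limsup_{n→∞} ∫_Q a_n dx dt ≤ ∫_Q a dx dt. Then a_n converges weakly to a in L¹(Q), i.e. ∫_Q a_n φ dx dt → ∫_Q a φ dx dt for every φ ∈ L^∞(Q). -/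
/-!
Fix a bounded test function `|φ| ≤ C` and one of the exceptional sets `s = E k`. Off `s`,
`∫ aₙ φ → ∫ a φ` by biting convergence. On `s`, the one-sided bound `aₙ ≥ -a₀` gives
`|aₙ| ≤ aₙ + 2|a₀|`, and the mass of `aₙ` on `s` is controlled by the hypothesis on the
`limsup`: `∫_s aₙ = ∫ aₙ - ∫_{sᶜ} aₙ` is eventually at most `∫_s a` plus any slack. Hence
`|∫ aₙ φ - ∫ a φ|` is eventually below `2C (∫_s |a| + ∫_s |a₀|)` plus any slack, and this
bound tends to `0` as `μ (E k) → 0` by absolute continuity of the integral.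
-/

open MeasureTheory Filter Set Topology

noncomputable section

/-- A bounded sequence `aₙ` in `L¹(μ)` converges to `b` in the biting sense: there is a
nonincreasing sequence of measurable sets `E k` with `μ (E k) → 0` such that, for each
fixed `k`, `aₙ ⇀ b` weakly in `L¹` on the complement of `E k`. -/
def BitingConvergesTo {α : Type*} [MeasurableSpace α] (μ : Measure α)
    (a : ℕ → α → ℝ) (b : α → ℝ) : Prop :=
  ∃ E : ℕ → Set α, (∀ k, MeasurableSet (E k)) ∧ Antitone E ∧
    Tendsto (fun k => μ (E k)) atTop (nhds 0) ∧
    ∀ k, ∀ φ : α → ℝ, Measurable φ → (∃ C : ℝ, ∀ y, |φ y| ≤ C) →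
      Tendsto (fun n => ∫ y in (E k)ᶜ, a n y * φ y ∂μ) atTop
        (nhds (∫ y in (E k)ᶜ, b y * φ y ∂μ))

lemma tendsto_of_forall_eventually_dist_lt_add {ι κ X : Type*} [PseudoMetricSpace X]
    {l : Filter ι} {l' : Filter κ} [l'.NeBot] {x : ι → X} {y : X} {c : κ → ℝ}
    (hc : Tendsto c l' (𝓝 0)) (h : ∀ k, ∀ δ > 0, ∀ᶠ i in l, dist (x i) y < c k + δ) :
    Tendsto x l (𝓝 y) := by
  refine Metric.tendsto_nhds.2 fun ε hε => ?_
  obtain ⟨k, hk⟩ := (hc.eventually (gt_mem_nhds (half_pos hε))).exists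
  filter_upwards [h k (ε / 2) (half_pos hε)] with i hi
  linarith

section Integrals

variable {α : Type*} [MeasurableSpace α] {μ : Measure α}

lemma abs_integral_mul_le_mul_integral_abs {f φ : α → ℝ} {C : ℝ} (hf : Integrable f μ)
    (hφ : ∀ x, |φ x| ≤ C) : |∫ x, f x * φ x ∂μ| ≤ C * ∫ x, |f x| ∂μ :=
  calc |∫ x, f x * φ x ∂μ| ≤ ∫ x, |f x * φ x| ∂μ := abs_integral_le_integral_abs
    _ ≤ ∫ x, C * |f x| ∂μ := by
      refine integral_mono_of_nonneg (ae_of_all _ fun x => abs_nonneg _)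
        (hf.abs.const_mul C) (ae_of_all _ fun x => ?_)
      show |f x * φ x| ≤ C * |f x|
      rw [abs_mul, mul_comm C]
      exact mul_le_mul_of_nonneg_left (hφ x) (abs_nonneg _)
    _ = C * ∫ x, |f x| ∂μ := integral_const_mul _ _

lemma integral_abs_le_of_neg_le {f g : α → ℝ} (hf : Integrable f μ) (hg : Integrable g μ)
    (hfg : ∀ᵐ x ∂μ, -g x ≤ f x) :
    ∫ x, |f x| ∂μ ≤ ∫ x, f x ∂μ + 2 * ∫ x, |g x| ∂μ := by
  have hpt : ∀ᵐ x ∂μ, |f x| ≤ f x + 2 * |g x| := by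
    filter_upwards [hfg] with x hx
    rw [abs_le']
    constructor <;> linarith [le_abs_self (g x), abs_nonneg (g x)]
  calc ∫ x, |f x| ∂μ ≤ ∫ x, f x + 2 * |g x| ∂μ :=
        integral_mono_ae hf.abs (hf.add (hg.abs.const_mul 2)) hpt
    _ = ∫ x, f x ∂μ + 2 * ∫ x, |g x| ∂μ := by
      rw [integral_add hf (hg.abs.const_mul 2), integral_const_mul]

lemma dist_integral_le_dist_setIntegral_compl_add {f h : α → ℝ} {s : Set α}
    (hs : MeasurableSet s) (hf : Integrable f μ) (hh : Integrable h μ) :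
    dist (∫ x, f x ∂μ) (∫ x, h x ∂μ) ≤
      dist (∫ x in sᶜ, f x ∂μ) (∫ x in sᶜ, h x ∂μ) + |∫ x in s, f x ∂μ| + |∫ x in s, h x ∂μ| := by
  rw [← integral_add_compl hs hf, ← integral_add_compl hs hh, Real.dist_eq, Real.dist_eq]
  calc _ = |(∫ x in sᶜ, f x ∂μ) - (∫ x in sᶜ, h x ∂μ) + (∫ x in s, f x ∂μ)
        + -∫ x in s, h x ∂μ| := by ring_nf
    _ ≤ _ := by
      refine (abs_add_le _ _).trans ?_
      rw [abs_neg]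
      gcongr
      exact abs_add_le _ _

variable {a : ℕ → α → ℝ} {b : α → ℝ} {s : Set α}

lemma eventually_setIntegral_lt_add_of_limsup_integral_le (hs : MeasurableSet s)
    (ha : ∀ n, Integrable (a n) μ) (hb : Integrable b μ)
    (hbdd : IsBoundedUnder (· ≤ ·) atTop fun n => ∫ x, a n x ∂μ)
    (hlimsup : limsup (fun n => ∫ x, a n x ∂μ) atTop ≤ ∫ x, b x ∂μ)
    (hcompl : Tendsto (fun n => ∫ x in sᶜ, a n x ∂μ) atTop (𝓝 (∫ x in sᶜ, b x ∂μ)))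
    {δ : ℝ} (hδ : 0 < δ) : ∀ᶠ n in atTop, ∫ x in s, a n x ∂μ < ∫ x in s, b x ∂μ + δ := by
  have htotal : ∀ᶠ n in atTop, ∫ x, a n x ∂μ < ∫ x, b x ∂μ + δ / 2 :=
    eventually_lt_of_limsup_lt (hlimsup.trans_lt (by linarith)) hbdd
  have hoff : ∀ᶠ n in atTop, ∫ x in sᶜ, b x ∂μ - δ / 2 < ∫ x in sᶜ, a n x ∂μ :=
    hcompl.eventually_const_lt (by linarith)
  filter_upwards [htotal, hoff] with n hn hn'
  linarith [integral_add_compl hs (ha n), integral_add_compl hs hb]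

lemma eventually_dist_integral_mul_lt_add {g φ : α → ℝ} {C : ℝ} (hs : MeasurableSet s)
    (ha : ∀ n, Integrable (a n) μ) (hb : Integrable b μ) (hg : Integrable g μ)
    (hlower : ∀ n, ∀ᵐ x ∂μ, -g x ≤ a n x)
    (hbdd : IsBoundedUnder (· ≤ ·) atTop fun n => ∫ x, a n x ∂μ)
    (hlimsup : limsup (fun n => ∫ x, a n x ∂μ) atTop ≤ ∫ x, b x ∂μ)
    (hφm : AEStronglyMeasurable φ μ) (hC : 0 ≤ C) (hφ : ∀ x, |φ x| ≤ C)
    (hcompl : Tendsto (fun n => ∫ x in sᶜ, a n x ∂μ) atTop (𝓝 (∫ x in sᶜ, b x ∂μ)))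
    (hcomplφ : Tendsto (fun n => ∫ x in sᶜ, a n x * φ x ∂μ) atTop
      (𝓝 (∫ x in sᶜ, b x * φ x ∂μ)))
    {δ : ℝ} (hδ : 0 < δ) :
    ∀ᶠ n in atTop, dist (∫ x, a n x * φ x ∂μ) (∫ x, b x * φ x ∂μ) <
      2 * C * (∫ x in s, |b x| ∂μ + ∫ x in s, |g x| ∂μ) + δ := by
  have hφ' : ∀ᵐ x ∂μ, ‖φ x‖ ≤ C := ae_of_all _ hφ
  have hδ' : C * (δ / (2 * (C + 1))) < δ / 2 := by
    rw [mul_div_assoc', div_lt_div_iff₀ (by positivity) two_pos]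
    linarith
  have hoff := Metric.tendsto_nhds.1 hcomplφ (δ / 2) (half_pos hδ)
  have hmass := eventually_setIntegral_lt_add_of_limsup_integral_le hs ha hb hbdd hlimsup hcompl
    (show 0 < δ / (2 * (C + 1)) by positivity)
  filter_upwards [hoff, hmass] with n hn hn'
  have hbs : |∫ x in s, b x * φ x ∂μ| ≤ C * ∫ x in s, |b x| ∂μ :=
    abs_integral_mul_le_mul_integral_abs hb.integrableOn hφ
  have has : ∫ x in s, |a n x| ∂μ ≤ ∫ x in s, a n x ∂μ + 2 * ∫ x in s, |g x| ∂μ :=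
    integral_abs_le_of_neg_le (ha n).integrableOn hg.integrableOn (ae_restrict_of_ae (hlower n))
  have hb_le : ∫ x in s, b x ∂μ ≤ ∫ x in s, |b x| ∂μ :=
    integral_mono hb.integrableOn hb.abs.integrableOn fun x => le_abs_self _
  have has_φ : |∫ x in s, a n x * φ x ∂μ| ≤
      C * (∫ x in s, |b x| ∂μ + 2 * ∫ x in s, |g x| ∂μ) + C * (δ / (2 * (C + 1))) := by
    rw [← mul_add]
    refine (abs_integral_mul_le_mul_integral_abs (ha n).integrableOn hφ).trans ?_
    gcongr
    linarith
  have := dist_integral_le_dist_setIntegral_compl_add hs ((ha n).mul_bdd hφm hφ')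
    (hb.mul_bdd hφm hφ')
  linarith

end Integrals

theorem weakL1_of_biting_general
    (Ω : Set E3)
    (T : ℝ)
    (a : ℕ → E3 × ℝ → ℝ) (aLim : E3 × ℝ → ℝ) (a0 : E3 × ℝ → ℝ)
    (hint : ∀ n, Integrable (a n) (volume.restrict (Ω ×ˢ Ioo (0:ℝ) T)))
    (hbdd : ∃ C : ℝ, ∀ n,
      ∫ y, |a n y| ∂(volume.restrict (Ω ×ˢ Ioo (0:ℝ) T)) ≤ C)
    (ha0int : Integrable a0 (volume.restrict (Ω ×ˢ Ioo (0:ℝ) T)))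
    (hlower : ∀ n, ∀ᵐ y ∂(volume.restrict (Ω ×ˢ Ioo (0:ℝ) T)), -(a0 y) ≤ a n y)
    (haLimint : Integrable aLim (volume.restrict (Ω ×ˢ Ioo (0:ℝ) T)))
    (hbite : BitingConvergesTo (volume.restrict (Ω ×ˢ Ioo (0:ℝ) T)) a aLim)
    (hlimsup : Filter.limsup
        (fun n => ∫ y, a n y ∂(volume.restrict (Ω ×ˢ Ioo (0:ℝ) T))) atTop ≤
      ∫ y, aLim y ∂(volume.restrict (Ω ×ˢ Ioo (0:ℝ) T))) :
    ∀ φ : E3 × ℝ → ℝ, Measurable φ → (∃ C : ℝ, ∀ y, |φ y| ≤ C) →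
      Tendsto (fun n => ∫ y, a n y * φ y ∂(volume.restrict (Ω ×ˢ Ioo (0:ℝ) T)))
        atTop (nhds (∫ y, aLim y * φ y ∂(volume.restrict (Ω ×ˢ Ioo (0:ℝ) T)))) := by
  intro φ hφm ⟨C, hφ⟩
  set μ := volume.restrict (Ω ×ˢ Ioo (0:ℝ) T)
  obtain ⟨E, hEm, -, hE0, hconv⟩ := hbite
  have hbddμ : IsBoundedUnder (· ≤ ·) atTop fun n => ∫ y, a n y ∂μ := by
    obtain ⟨B, hB⟩ := hbdd
    exact isBoundedUnder_of ⟨B, fun n => (le_abs_self _).trans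
      (abs_integral_le_integral_abs.trans (hB n))⟩
  have hsmall : Tendsto (fun k => 2 * C * (∫ y in E k, |aLim y| ∂μ + ∫ y in E k, |a0 y| ∂μ))
      atTop (𝓝 0) := by
    simpa using ((haLimint.abs.tendsto_setIntegral_nhds_zero hE0).add
      (ha0int.abs.tendsto_setIntegral_nhds_zero hE0)).const_mul (2 * C)
  refine tendsto_of_forall_eventually_dist_lt_add hsmall fun k δ hδ => ?_
  have hcompl : Tendsto (fun n => ∫ y in (E k)ᶜ, a n y ∂μ) atTop
      (𝓝 (∫ y in (E k)ᶜ, aLim y ∂μ)) := by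
    simpa using hconv k (fun _ => 1) measurable_const ⟨1, fun _ => by simp⟩
  exact eventually_dist_integral_mul_lt_add (hEm k) hint haLimint ha0int hlower hbddμ
    hlimsup hφm.aestronglyMeasurable ((abs_nonneg _).trans (hφ 0)) hφ hcompl
    (hconv k φ hφm ⟨C, hφ⟩) hδ

/-- **From biting convergence to weak `L¹` convergence**: if `aₙ ∈ L¹(Q)` is bounded in
`L¹`, `aₙ ≥ −a₀` a.e. with `0 ≤ a₀ ∈ L¹(Q)`, `aₙ → a` in the biting sense, and
`limsup ∫_Q aₙ ≤ ∫_Q a`, then `aₙ ⇀ a` weakly in `L¹(Q)`. -/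
theorem weakL1_of_biting
    (Ω : Set E3) (hΩo : IsOpen Ω) (hΩb : Bornology.IsBounded Ω)
    (T : ℝ) (hT : 0 < T)
    (a : ℕ → E3 × ℝ → ℝ) (aLim : E3 × ℝ → ℝ) (a0 : E3 × ℝ → ℝ)
    (hint : ∀ n, Integrable (a n) (volume.restrict (Ω ×ˢ Ioo (0:ℝ) T)))
    (hbdd : ∃ C : ℝ, ∀ n,
      ∫ y, |a n y| ∂(volume.restrict (Ω ×ˢ Ioo (0:ℝ) T)) ≤ C)
    (ha0int : Integrable a0 (volume.restrict (Ω ×ˢ Ioo (0:ℝ) T)))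
    (ha0nn : 0 ≤ᵐ[volume.restrict (Ω ×ˢ Ioo (0:ℝ) T)] a0)
    (hlower : ∀ n, ∀ᵐ y ∂(volume.restrict (Ω ×ˢ Ioo (0:ℝ) T)), -(a0 y) ≤ a n y)
    (haLimint : Integrable aLim (volume.restrict (Ω ×ˢ Ioo (0:ℝ) T)))
    (hbite : BitingConvergesTo (volume.restrict (Ω ×ˢ Ioo (0:ℝ) T)) a aLim)
    (hlimsup : Filter.limsup
        (fun n => ∫ y, a n y ∂(volume.restrict (Ω ×ˢ Ioo (0:ℝ) T))) atTop ≤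
      ∫ y, aLim y ∂(volume.restrict (Ω ×ˢ Ioo (0:ℝ) T))) :
    ∀ φ : E3 × ℝ → ℝ, Measurable φ → (∃ C : ℝ, ∀ y, |φ y| ≤ C) →
      Tendsto (fun n => ∫ y, a n y * φ y ∂(volume.restrict (Ω ×ˢ Ioo (0:ℝ) T)))
        atTop (nhds (∫ y, aLim y * φ y ∂(volume.restrict (Ω ×ˢ Ioo (0:ℝ) T)))) :=
  weakL1_of_biting_general Ω T a aLim a0 hint hbdd ha0int hlower haLimint hbite hlimsup
end
end

section
/- Modular bound for accumulated strains: let M* be an N-function satisfying the Δ₂-condition with constant c and function h ∈ L¹(Ω), h ≥ 0, let T > 0, let a₀ : Ω → S³ satisfy ∫_Ω M*(x, a₀(x)) dx < ∞, and let g : Q → S³ be measurable with ∫_Q M*(x, g(x,t)) dx dt < ∞. Define a(x,t) = a₀(x) + ∫₀ᵗ g(x,s) ds. Then there exists a constant C, depending only on c, T and ∫_Ω h dx, such that ∫_Q M*(x, a(x,t)) dx dt ≤ C (1 + ∫_Ω M*(x, a₀(x)) dx + ∫_Q M*(x, g(x,t)) dx dt); in particular ∫_Q M*(x, a) dx dt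 < ∞. -/
open MeasureTheory Filter Set Topology

noncomputable section

/-! Fix `x ∈ Ω` and `0 < t < T ≤ 2 ^ k`, and let `B = ∫₀ᵗ g(x, s) ds`. Convexity gives
`M(a₀ + B) ≤ (M(2a₀) + M(2B)) / 2`. Now `2B = 2 ^ (k + 1) • (2 ^ (-k) • B)`, and `2 ^ (-k) • B` is
the mean over `(0, 2 ^ k)` of `g(x, ·)` extended by zero, so Jensen's inequality and `M(x, 0) = 0`
give `M(2 ^ (-k) • B) ≤ ∫₀ᵀ M(g)`; paying for the `k + 1` doublings with the `Δ₂`-condition yields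
`M(a) ≤ (k + 1) c ^ (k + 1) (M(a₀) + h + ∫₀ᵀ M(g))` pointwise, which is then integrated over `Q`. -/

open scoped ENNReal

section Delta2

variable {E : Type*} [AddCommGroup E] [Module ℝ E] {s : Set E} {M : E → ℝ} {c h : ℝ}

lemma two_pow_smul_mem (hs : ∀ ξ ∈ s, (2 : ℝ) • ξ ∈ s) (n : ℕ) {ξ : E} (hξ : ξ ∈ s) :
    (2 : ℝ) ^ n • ξ ∈ s := by
  induction n with
  | zero => simpa using hξ
  | succ n ih => simpa [pow_succ', mul_smul] using hs _ ih

lemma map_two_pow_smul_le (hs : ∀ ξ ∈ s, (2 : ℝ) • ξ ∈ s) (hc : 1 ≤ c) (hh : 0 ≤ h)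
    (hΔ : ∀ ξ ∈ s, M ((2 : ℝ) • ξ) ≤ c * M ξ + h) (n : ℕ) {ξ : E} (hξ : ξ ∈ s) :
    M ((2 : ℝ) ^ n • ξ) ≤ c ^ n * M ξ + n * c ^ n * h := by
  induction n with
  | zero => simp
  | succ n ih =>
    calc M ((2 : ℝ) ^ (n + 1) • ξ) = M ((2 : ℝ) • (2 : ℝ) ^ n • ξ) := by
          rw [pow_succ', mul_smul]
      _ ≤ c * M ((2 : ℝ) ^ n • ξ) + h := hΔ _ (two_pow_smul_mem hs n hξ)
      _ ≤ c * (c ^ n * M ξ + n * c ^ n * h) + h := by gcongr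
      _ ≤ c ^ (n + 1) * M ξ + (n + 1 : ℕ) * c ^ (n + 1) * h := by
          have hc1 : 1 ≤ c ^ (n + 1) := one_le_pow₀ hc
          rw [pow_succ] at hc1 ⊢
          push_cast
          nlinarith [mul_le_mul_of_nonneg_right hc1 hh]

lemma ConvexOn.map_add_le_of_two_smul (hM : ConvexOn ℝ s M) {a b : E}
    (ha : (2 : ℝ) • a ∈ s) (hb : (2 : ℝ) • b ∈ s) :
    M (a + b) ≤ (M ((2 : ℝ) • a) + M ((2 : ℝ) • b)) / 2 := by
  have := hM.2 ha hb (by norm_num : (0 : ℝ) ≤ 1 / 2) (by norm_num : (0 : ℝ) ≤ 1 / 2)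
    (by norm_num)
  simp only [smul_smul, smul_eq_mul] at this
  norm_num at this
  linarith

end Delta2

lemma Set.indicator_mem {α β : Type*} [Zero β] {A : Set α} {t : Set β} (ht0 : 0 ∈ t)
    {g : α → β} (hgt : ∀ x ∈ A, g x ∈ t) (x : α) : A.indicator g x ∈ t := by
  by_cases hx : x ∈ A
  · simpa [hx] using hgt x hx
  · simpa [hx] using ht0

section Jensen

variable {α E : Type*} [MeasurableSpace α] [NormedAddCommGroup E] [NormedSpace ℝ E]
  {μ : Measure α} {s : Set E} {M : E → ℝ} {A : Set α} {f : α → E}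

lemma average_indicator (hA : MeasurableSet A) :
    ⨍ x, A.indicator f x ∂μ = (μ.real univ)⁻¹ • ∫ x in A, f x ∂μ := by
  rw [average_eq, integral_indicator hA]

variable [CompleteSpace E] [IsFiniteMeasure μ] [NeZero μ]

lemma Convex.inv_smul_setIntegral_mem (hs : Convex ℝ s) (hsc : IsClosed s) (hs0 : 0 ∈ s)
    (hA : MeasurableSet A) (hfs : ∀ x ∈ A, f x ∈ s) (hf : IntegrableOn f A μ) :
    (μ.real univ)⁻¹ • ∫ x in A, f x ∂μ ∈ s := by
  rw [← average_indicator hA]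
  exact hs.average_mem hsc (ae_of_all _ (indicator_mem hs0 hfs)) (hf.integrable_indicator hA)

/-- Jensen's inequality for `f` extended by zero outside `A`. -/
lemma ConvexOn.map_inv_smul_setIntegral_le (hM : ConvexOn ℝ s M) (hMc : ContinuousOn M s)
    (hsc : IsClosed s) (hs0 : 0 ∈ s) (hM0 : M 0 = 0) (hA : MeasurableSet A)
    (hfs : ∀ x ∈ A, f x ∈ s) (hf : IntegrableOn f A μ)
    (hMf : IntegrableOn (fun x => M (f x)) A μ) :
    M ((μ.real univ)⁻¹ • ∫ x in A, f x ∂μ) ≤ (μ.real univ)⁻¹ * ∫ x in A, M (f x) ∂μ := by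
  have hcomp : (fun x => M (A.indicator f x)) = A.indicator (fun x => M (f x)) :=
    (indicator_comp_of_zero hM0).symm
  have h := hM.map_average_le hMc hsc (ae_of_all _ (indicator_mem hs0 hfs))
    (hf.integrable_indicator hA)
    (by rw [Function.comp_def, hcomp]; exact hMf.integrable_indicator hA)
  rwa [average_indicator hA, hcomp, average_indicator hA, smul_eq_mul] at h

end Jensen

section Interval

variable {E : Type*} [NormedAddCommGroup E] [NormedSpace ℝ E] [CompleteSpace E]
  {s : Set E} {M : E → ℝ} {g : ℝ → E} {t τ : ℝ}

lemma volume_restrict_Ioo_real_univ (hτ : 0 ≤ τ) :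
    (volume.restrict (Ioo 0 τ)).real univ = τ := by
  rw [measureReal_restrict_apply_univ, Real.volume_real_Ioo_of_le hτ, sub_zero]

lemma restrict_Ioo_restrict_Ioo (htτ : t ≤ τ) :
    (volume.restrict (Ioo (0 : ℝ) τ)).restrict (Ioo 0 t) = volume.restrict (Ioo 0 t) :=
  Measure.restrict_restrict_of_subset (Ioo_subset_Ioo_right htτ)

lemma Convex.inv_smul_setIntegral_Ioo_mem (hs : Convex ℝ s) (hsc : IsClosed s) (hs0 : 0 ∈ s)
    (hτ : 0 < τ) (htτ : t ≤ τ) (hgs : ∀ r ∈ Ioo 0 t, g r ∈ s)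
    (hg : IntegrableOn g (Ioo 0 t)) :
    τ⁻¹ • ∫ r in Ioo 0 t, g r ∈ s := by
  have : NeZero (volume.restrict (Ioo 0 τ)) := ⟨by simpa using hτ⟩
  have hsub := restrict_Ioo_restrict_Ioo htτ
  have h := hs.inv_smul_setIntegral_mem hsc hs0 measurableSet_Ioo hgs
    (by rwa [IntegrableOn, hsub])
  rwa [volume_restrict_Ioo_real_univ hτ.le, hsub] at h

lemma ConvexOn.map_inv_smul_setIntegral_Ioo_le (hM : ConvexOn ℝ s M) (hMc : ContinuousOn M s)
    (hsc : IsClosed s) (hs0 : 0 ∈ s) (hM0 : M 0 = 0) (hMnn : ∀ ξ ∈ s, 0 ≤ M ξ)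
    (hτ : 1 ≤ τ) (htτ : t ≤ τ) (hgs : ∀ r ∈ Ioo 0 t, g r ∈ s)
    (hg : IntegrableOn g (Ioo 0 t)) (hMg : IntegrableOn (fun r => M (g r)) (Ioo 0 t)) :
    M (τ⁻¹ • ∫ r in Ioo 0 t, g r) ≤ ∫ r in Ioo 0 t, M (g r) := by
  have : NeZero (volume.restrict (Ioo 0 τ)) := ⟨by simpa using zero_lt_one.trans_le hτ⟩
  have hsub := restrict_Ioo_restrict_Ioo htτ
  have h := hM.map_inv_smul_setIntegral_le hMc hsc hs0 hM0 measurableSet_Ioo hgs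
    (by rwa [IntegrableOn, hsub]) (by rwa [IntegrableOn, hsub])
  rw [volume_restrict_Ioo_real_univ (zero_le_one.trans hτ), hsub] at h
  have hint : 0 ≤ ∫ r in Ioo 0 t, M (g r) := setIntegral_nonneg measurableSet_Ioo
    fun r hr => hMnn _ (hgs r hr)
  exact h.trans (mul_le_of_le_one_left hint (inv_le_one_of_one_le₀ hτ))

end Interval

section Pointwise

variable {E : Type*} [NormedAddCommGroup E] [NormedSpace ℝ E] [CompleteSpace E]
  {s : Set E} {M : E → ℝ} {c h t T : ℝ} {k : ℕ} {g : ℝ → E}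

lemma ConvexOn.map_add_setIntegral_Ioo_le (hM : ConvexOn ℝ s M) (hMc : ContinuousOn M s)
    (hsc : IsClosed s) (hs0 : 0 ∈ s) (hs2 : ∀ ξ ∈ s, (2 : ℝ) • ξ ∈ s) (hM0 : M 0 = 0)
    (hMnn : ∀ ξ ∈ s, 0 ≤ M ξ) (hc : 1 ≤ c) (hh : 0 ≤ h)
    (hΔ : ∀ ξ ∈ s, M ((2 : ℝ) • ξ) ≤ c * M ξ + h) (htT : t ≤ T) (hTk : T ≤ 2 ^ k)
    (hgs : ∀ r, g r ∈ s) (hg : IntegrableOn g (Ioo 0 T))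
    (hMg : IntegrableOn (fun r => M (g r)) (Ioo 0 T)) {a : E} (ha : a ∈ s) :
    M (a + ∫ r in Ioo 0 t, g r) ≤
      (k + 1) * c ^ (k + 1) * (M a + h + ∫ r in Ioo 0 T, M (g r)) := by
  set τ : ℝ := 2 ^ k
  set B := ∫ r in Ioo 0 t, g r
  set G := ∫ r in Ioo 0 T, M (g r)
  have hτ : 1 ≤ τ := one_le_pow₀ one_le_two
  have hsub : Ioo 0 t ⊆ Ioo 0 T := Ioo_subset_Ioo_right htT
  have hB : τ⁻¹ • B ∈ s := hM.1.inv_smul_setIntegral_Ioo_mem hsc hs0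
    (zero_lt_one.trans_le hτ) (htT.trans hTk) (fun r _ => hgs r) (hg.mono_set hsub)
  have hJensen : M (τ⁻¹ • B) ≤ G :=
    (hM.map_inv_smul_setIntegral_Ioo_le hMc hsc hs0 hM0 hMnn hτ (htT.trans hTk)
      (fun r _ => hgs r) (hg.mono_set hsub) (hMg.mono_set hsub)).trans
    (setIntegral_mono_set hMg (ae_of_all _ fun r => hMnn _ (hgs r)) hsub.eventuallyLE)
  have h2B : (2 : ℝ) • B = (2 : ℝ) ^ (k + 1) • τ⁻¹ • B := by
    rw [smul_smul, pow_succ', mul_assoc, mul_inv_cancel₀ (by positivity), mul_one]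
  have hMB : M ((2 : ℝ) • B) ≤ c ^ (k + 1) * G + (k + 1 : ℕ) * c ^ (k + 1) * h := by
    rw [h2B]
    refine (map_two_pow_smul_le hs2 hc hh hΔ (k + 1) hB).trans ?_
    gcongr
  have hMa : M ((2 : ℝ) • a) ≤ c * M a + h := hΔ a ha
  have hmid : M (a + B) ≤ (M ((2 : ℝ) • a) + M ((2 : ℝ) • B)) / 2 :=
    hM.map_add_le_of_two_smul (hs2 a ha) (h2B ▸ two_pow_smul_mem hs2 (k + 1) hB)
  have hc0 : 0 ≤ c := zero_le_one.trans hc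
  have hcK : c ≤ c ^ (k + 1) := by simpa using pow_le_pow_right₀ hc (Nat.succ_pos k)
  have hKk : c ^ (k + 1) ≤ (k + 1) * c ^ (k + 1) :=
    le_mul_of_one_le_left (by positivity) (by simp)
  have hG : 0 ≤ G := setIntegral_nonneg measurableSet_Ioo fun r _ => hMnn _ (hgs r)
  push_cast at hMB
  linarith [mul_le_mul_of_nonneg_right (hcK.trans hKk) (hMnn a ha),
    mul_le_mul_of_nonneg_right hKk hG, mul_le_mul_of_nonneg_right ((hc.trans hcK).trans hKk) hh,
    mul_nonneg hc0 (hMnn a ha), mul_nonneg (pow_nonneg hc0 (k + 1)) hG]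

end Pointwise

section Product

variable {α β : Type*} [MeasurableSpace α] [MeasurableSpace β] {μ : Measure α} {ν : Measure β}

lemma lintegral_prod_comp_fst [SFinite ν] {φ : α → ℝ≥0∞} (hφ : AEMeasurable φ μ) :
    ∫⁻ q, φ q.1 ∂μ.prod ν = ν univ * ∫⁻ x, φ x ∂μ := by
  simpa [mul_comm] using lintegral_prod_mul (g := fun _ : β => (1 : ℝ≥0∞)) hφ aemeasurable_const

lemma lintegral_ofReal_integral_eq_lintegral_prod [SFinite ν] {F : α × β → ℝ}
    (hF : Measurable F) (hFnn : ∀ q, 0 ≤ F q) (hFi : ∀ᵐ x ∂μ, Integrable (fun y => F (x, y)) ν) :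
    ∫⁻ x, ENNReal.ofReal (∫ y, F (x, y) ∂ν) ∂μ = ∫⁻ q, ENNReal.ofReal (F q) ∂μ.prod ν := by
  rw [lintegral_prod _ hF.ennreal_ofReal.aemeasurable]
  exact lintegral_congr_ae (hFi.mono fun x hx =>
    ofReal_integral_eq_lintegral_ofReal hx (ae_of_all _ fun y => hFnn _))

end Product

lemma volume_restrict_prod {α β : Type*} [MeasureSpace α] [MeasureSpace β]
    [SFinite (volume : Measure α)] [SFinite (volume : Measure β)] (s : Set α) (t : Set β) :
    volume.restrict (s ×ˢ t) = (volume.restrict s).prod (volume.restrict t) := by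
  rw [Measure.volume_eq_prod, Measure.prod_restrict]

lemma ENNReal.mul_add_add_le_mul_one_add (K a b i : ℝ≥0∞) :
    K * (a + i + b) ≤ K * (1 + i) * (1 + a + b) := by
  rw [mul_assoc]
  gcongr
  calc a + i + b ≤ a + i + b + (1 + i * a + i * b) := le_self_add
    _ = (1 + i) * (1 + a + b) := by ring

-- `Matrix` carries no global norm; since `Mat3` is finite-dimensional any choice works, and the
-- sup norm of `Fin 3 → Fin 3 → ℝ` is compatible with the topology of `Matrix`.
instance : NormedAddCommGroup Mat3 := inferInstanceAs (NormedAddCommGroup (Fin 3 → Fin 3 → ℝ))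
instance : NormedSpace ℝ Mat3 := inferInstanceAs (NormedSpace ℝ (Fin 3 → Fin 3 → ℝ))
lemma smul_mem_sym3 (r : ℝ) {A : Mat3} (hA : A ∈ Sym3) : r • A ∈ Sym3 := hA.smul r

lemma norm_le_mnorm (ξ : Mat3) : ‖ξ‖ ≤ mnorm ξ := by
  refine (pi_norm_le_iff_of_nonneg (Real.sqrt_nonneg _)).2 fun j =>
    (pi_norm_le_iff_of_nonneg (Real.sqrt_nonneg _)).2 fun k => ?_
  rw [Real.norm_eq_abs, ← Real.sqrt_mul_self_eq_abs]
  refine Real.sqrt_le_sqrt ?_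
  calc ξ j k * ξ j k ≤ ∑ l, ξ j l * ξ j l :=
        Finset.single_le_sum (f := fun l => ξ j l * ξ j l) (fun l _ => mul_self_nonneg _)
          (Finset.mem_univ k)
    _ ≤ mdot ξ ξ :=
        Finset.single_le_sum (f := fun i => ∑ l, ξ i l * ξ i l)
          (fun i _ => Finset.sum_nonneg fun l _ => mul_self_nonneg _) (Finset.mem_univ j)

lemma integral_mat3_apply {α : Type*} [MeasurableSpace α] {μ : Measure α} {φ : α → Mat3}
    (hφ : Integrable φ μ) (j k : Fin 3) : (∫ x, φ x ∂μ) j k = ∫ x, φ x j k ∂μ :=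
  ((LinearMap.toContinuousLinearMap (Matrix.entryLinearMap ℝ ℝ j k)).integral_comp_comm hφ).symm

lemma of_intervalIntegral_eq_setIntegral_Ioo {φ : ℝ → Mat3} {t : ℝ} (ht : 0 ≤ t)
    (hφ : IntegrableOn φ (Ioo 0 t)) :
    (Matrix.of fun j k => ∫ s in (0 : ℝ)..t, φ s j k) = ∫ s in Ioo 0 t, φ s := by
  ext j k
  rw [Matrix.of_apply, intervalIntegral.integral_of_le ht, integral_Ioc_eq_integral_Ioo,
    integral_mat3_apply hφ]

lemma measurable_comp_of_caratheodory {X E α : Type*} [MeasurableSpace X] [TopologicalSpace E]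
    [TopologicalSpace.MetrizableSpace E] [SecondCountableTopology E] [MeasurableSpace E]
    [OpensMeasurableSpace E] [MeasurableSpace α] {s : Set E} {M : X → E → ℝ}
    (hmeas : ∀ ξ, Measurable fun x => M x ξ) (hcont : ∀ x, ContinuousOn (M x) s)
    {w : α → X} {v : α → E} (hw : Measurable w) (hv : Measurable v) (hvs : ∀ a, v a ∈ s) :
    Measurable fun a => M (w a) (v a) := by
  have hM : Measurable (Function.uncurry fun (ξ : s) (x : X) => M x ξ) :=
    measurable_uncurry_of_continuous_of_measurable
      (fun x => continuousOn_iff_continuous_domRestrict.mp (hcont x)) fun ξ => hmeas ξ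
  exact hM.comp ((hv.subtype_mk (h := hvs)).prodMk hw)

lemma exists_le_add_of_tendsto_div_atTop {α : Type*} {s : Set α} {M n : α → ℝ}
    (hMnn : ∀ ξ ∈ s, 0 ≤ M ξ)
    (htop : Tendsto (fun ξ => M ξ / n ξ) (comap n atTop ⊓ 𝓟 s) atTop) :
    ∃ R, ∀ ξ ∈ s, n ξ ≤ R + M ξ := by
  obtain ⟨R, hR⟩ := eventually_atTop.1 (eventually_comap.1
    (eventually_inf_principal.1 (htop.eventually (eventually_ge_atTop 1))))
  refine ⟨max R 1, fun ξ hξ => ?_⟩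
  rcases le_or_gt (n ξ) (max R 1) with hle | hlt
  · linarith [hMnn ξ hξ]
  · have hpos : 0 < n ξ := zero_lt_one.trans_le ((le_max_right _ _).trans hlt.le)
    have := hR (n ξ) ((le_max_left _ _).trans hlt.le) ξ rfl hξ
    rw [le_div_iff₀ hpos, one_mul] at this
    linarith [le_max_right R 1]

def accumulatedStrain (a0 : E3 → Mat3) (g : E3 × ℝ → Mat3) (q : E3 × ℝ) : Mat3 :=
  a0 q.1 + Matrix.of fun j k => ∫ s in (0 : ℝ)..q.2, g (q.1, s) j k

namespace IsNFunction

variable {Ω : Set E3} {M : E3 → Mat3 → ℝ} {T : ℝ} {g : E3 × ℝ → Mat3}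

lemma measurable_comp (hN : IsNFunction Ω M) {α : Type*} [MeasurableSpace α] {w : α → E3}
    {v : α → Mat3} (hw : Measurable w) (hv : Measurable v) (hvs : ∀ a, v a ∈ Sym3) :
    Measurable fun a => M (w a) (v a) :=
  measurable_comp_of_caratheodory hN.meas hN.cont hw hv hvs

lemma exists_norm_le_add (hN : IsNFunction Ω M) {x : E3} (hx : x ∈ Ω) :
    ∃ R, ∀ ξ ∈ Sym3, ‖ξ‖ ≤ R + M x ξ := by
  obtain ⟨R, hR⟩ := exists_le_add_of_tendsto_div_atTop (fun ξ _ => hN.nonneg x ξ)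
    (hN.tendsto_top x hx)
  exact ⟨R, fun ξ hξ => (norm_le_mnorm ξ).trans (hR ξ hξ)⟩

/-- Coercivity of `M x` turns integrability of `M x ∘ g(x, ·)` into integrability of `g(x, ·)`. -/
lemma ae_integrableOn_fiber (hN : IsNFunction Ω M) (hΩ : MeasurableSet Ω) (hg : Measurable g)
    (hgs : ∀ q, g q ∈ Sym3)
    (hfin : ∫⁻ q in Ω ×ˢ Ioo 0 T, ENNReal.ofReal (M q.1 (g q)) < ⊤) :
    ∀ᵐ x ∂volume.restrict Ω, IntegrableOn (fun r => g (x, r)) (Ioo 0 T) ∧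
      IntegrableOn (fun r => M x (g (x, r))) (Ioo 0 T) := by
  have hMg : Measurable fun q : E3 × ℝ => ENNReal.ofReal (M q.1 (g q)) :=
    (hN.measurable_comp measurable_fst hg hgs).ennreal_ofReal
  rw [volume_restrict_prod, lintegral_prod _ hMg.aemeasurable] at hfin
  filter_upwards [ae_restrict_mem hΩ, ae_lt_top hMg.lintegral_prod_right' hfin.ne]
    with x hx hxfin
  have hMgx : IntegrableOn (fun r => M x (g (x, r))) (Ioo 0 T) :=
    ⟨(hN.measurable_comp measurable_const (hg.comp measurable_prodMk_left)
      fun r => hgs _).aestronglyMeasurable,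
      (hasFiniteIntegral_iff_ofReal (ae_of_all _ fun r => hN.nonneg _ _)).2 hxfin⟩
  obtain ⟨R, hR⟩ := hN.exists_norm_le_add hx
  refine ⟨Integrable.mono' ((integrable_const R).add hMgx)
    (hg.comp measurable_prodMk_left).aestronglyMeasurable
    (ae_of_all _ fun r => hR _ (hgs _)), hMgx⟩

lemma accumulatedStrain_le (hN : IsNFunction Ω M) {x : E3} (hx : x ∈ Ω) {c b : ℝ} {k : ℕ}
    (hc : 1 ≤ c) (hb : 0 ≤ b) (hΔ : ∀ ξ ∈ Sym3, M x ((2 : ℝ) • ξ) ≤ c * M x ξ + b)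
    (hTk : T ≤ 2 ^ k) {a0 : E3 → Mat3} (ha0s : ∀ x, a0 x ∈ Sym3) (hgs : ∀ q, g q ∈ Sym3)
    (hg : IntegrableOn (fun r => g (x, r)) (Ioo 0 T))
    (hMg : IntegrableOn (fun r => M x (g (x, r))) (Ioo 0 T)) {t : ℝ} (ht : t ∈ Ioo 0 T) :
    M x (accumulatedStrain a0 g (x, t)) ≤
      (k + 1) * c ^ (k + 1) * (M x (a0 x) + b + ∫ r in Ioo 0 T, M x (g (x, r))) := by
  rw [accumulatedStrain, of_intervalIntegral_eq_setIntegral_Ioo ht.1.le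
    (hg.mono_set (Ioo_subset_Ioo_right ht.2.le))]
  exact (hN.convexOn x).map_add_setIntegral_Ioo_le (hN.cont x) isClosed_sym3 zero_mem_sym3
    (fun ξ => smul_mem_sym3 2) ((hN.zero_iff x hx 0 zero_mem_sym3).2 rfl)
    (fun ξ _ => hN.nonneg x ξ) hc hb hΔ ht.2.le hTk (fun r => hgs _) hg hMg (ha0s x)

lemma ae_accumulatedStrain_le (hN : IsNFunction Ω M) (hΩ : MeasurableSet Ω) {c : ℝ} {k : ℕ}
    (hc : 1 ≤ c) {h : E3 → ℝ} (hh : ∀ x, 0 ≤ h x)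
    (hΔ : ∀ᵐ x ∂volume.restrict Ω, ∀ ξ ∈ Sym3, M x ((2 : ℝ) • ξ) ≤ c * M x ξ + h x)
    (hTk : T ≤ 2 ^ k) {a0 : E3 → Mat3} (ha0s : ∀ x, a0 x ∈ Sym3) (hgs : ∀ q, g q ∈ Sym3)
    (hfib : ∀ᵐ x ∂volume.restrict Ω, IntegrableOn (fun r => g (x, r)) (Ioo 0 T) ∧
      IntegrableOn (fun r => M x (g (x, r))) (Ioo 0 T)) :
    ∀ᵐ q ∂(volume.restrict Ω).prod (volume.restrict (Ioo 0 T)),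
      M q.1 (accumulatedStrain a0 g q) ≤
        (k + 1) * c ^ (k + 1) * (M q.1 (a0 q.1) + h q.1 + ∫ r in Ioo 0 T, M q.1 (g (q.1, r))) := by
  filter_upwards [Measure.quasiMeasurePreserving_fst.ae (hΔ.and (hfib.and (ae_restrict_mem hΩ))),
    Measure.quasiMeasurePreserving_snd.ae (ae_restrict_mem measurableSet_Ioo)]
    with ⟨x, t⟩ ⟨hΔx, ⟨hgx, hMgx⟩, hx⟩ ht
  exact hN.accumulatedStrain_le hx hc (hh x) hΔx hTk ha0s hgs hgx hMgx ht

lemma lintegral_accumulatedStrain_le (hN : IsNFunction Ω M) (hΩ : MeasurableSet Ω) {c : ℝ}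
    {k : ℕ} (hc : 1 ≤ c) {h : E3 → ℝ} (hh : ∀ x, 0 ≤ h x) (hhi : IntegrableOn h Ω)
    (hΔ : ∀ᵐ x ∂volume.restrict Ω, ∀ ξ ∈ Sym3, M x ((2 : ℝ) • ξ) ≤ c * M x ξ + h x)
    (hTk : T ≤ 2 ^ k) {a0 : E3 → Mat3} (ha0 : Measurable a0) (ha0s : ∀ x, a0 x ∈ Sym3)
    (hg : Measurable g) (hgs : ∀ q, g q ∈ Sym3)
    (hfin : ∫⁻ q in Ω ×ˢ Ioo 0 T, ENNReal.ofReal (M q.1 (g q)) < ⊤) :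
    ∫⁻ q in Ω ×ˢ Ioo 0 T, ENNReal.ofReal (M q.1 (accumulatedStrain a0 g q)) ≤
      ENNReal.ofReal ((k + 1) * c ^ (k + 1)) * ENNReal.ofReal T *
        ((∫⁻ x in Ω, ENNReal.ofReal (M x (a0 x))) + ENNReal.ofReal (∫ x in Ω, h x) +
          ∫⁻ q in Ω ×ˢ Ioo 0 T, ENNReal.ofReal (M q.1 (g q))) := by
  set K : ℝ := (k + 1) * c ^ (k + 1)
  have hK : 0 ≤ K := by have := zero_le_one.trans hc; positivity
  set G : E3 → ℝ := fun x => ∫ r in Ioo 0 T, M x (g (x, r))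
  set F : E3 → ℝ≥0∞ := fun x =>
    ENNReal.ofReal (M x (a0 x)) + ENNReal.ofReal (h x) + ENNReal.ofReal (G x)
  have hMg := hN.measurable_comp measurable_fst hg hgs
  have hMa0 : Measurable fun x => M x (a0 x) := hN.measurable_comp measurable_id ha0 ha0s
  have hG : Measurable G := hMg.stronglyMeasurable.integral_prod_right'.measurable
  have hfib := hN.ae_integrableOn_fiber hΩ hg hgs hfin
  have hbound := hN.ae_accumulatedStrain_le hΩ hc hh hΔ hTk ha0s hgs hfib
  have hGint : ∫⁻ x in Ω, ENNReal.ofReal (G x) = ∫⁻ q, ENNReal.ofReal (M q.1 (g q))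
      ∂(volume.restrict Ω).prod (volume.restrict (Ioo 0 T)) :=
    lintegral_ofReal_integral_eq_lintegral_prod hMg (fun q => hN.nonneg _ _)
      (hfib.mono fun x hx => hx.2)
  have hhint : ∫⁻ x in Ω, ENNReal.ofReal (h x) = ENNReal.ofReal (∫ x in Ω, h x) :=
    (ofReal_integral_eq_lintegral_ofReal hhi (ae_of_all _ hh)).symm
  rw [volume_restrict_prod]
  calc _ ≤ ∫⁻ q, ENNReal.ofReal K * F q.1
            ∂(volume.restrict Ω).prod (volume.restrict (Ioo 0 T)) := by
        refine lintegral_mono_ae (hbound.mono fun q hq => ?_)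
        have hG0 : 0 ≤ G q.1 := integral_nonneg fun r => hN.nonneg _ _
        simp only [F]
        rw [← ENNReal.ofReal_add (hN.nonneg _ _) (hh _), ← ENNReal.ofReal_add (by
          linarith [hN.nonneg q.1 (a0 q.1), hh q.1]) hG0, ← ENNReal.ofReal_mul hK]
        exact ENNReal.ofReal_le_ofReal hq
    _ = _ := by
        have hMa0h : AEMeasurable (fun x => ENNReal.ofReal (M x (a0 x)) + ENNReal.ofReal (h x))
            (volume.restrict Ω) :=
          hMa0.ennreal_ofReal.aemeasurable.add hhi.aemeasurable.ennreal_ofReal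
        rw [lintegral_prod_comp_fst (φ := fun x => ENNReal.ofReal K * F x)
          ((hMa0h.add hG.ennreal_ofReal.aemeasurable).const_mul _),
          Measure.restrict_apply_univ, Real.volume_Ioo, sub_zero,
          lintegral_const_mul' _ _ ENNReal.ofReal_ne_top, lintegral_add_left' hMa0h,
          lintegral_add_left hMa0.ennreal_ofReal, hhint, hGint]
        ring

end IsNFunction

/-- **Modular bound for accumulated strains**: if `M*` satisfies the `Δ₂`-condition with
constant `c` and function `h`, `∫_Ω M*(x,a₀) dx < ∞` and `∫_Q M*(x,g) dx dt < ∞`, then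
for `a(x,t) = a₀(x) + ∫₀ᵗ g(x,s) ds`, there is `C` depending only on `c`, `T` and
`∫_Ω h dx` with `∫_Q M*(x,a) ≤ C (1 + ∫_Ω M*(x,a₀) + ∫_Q M*(x,g))`; in particular
`∫_Q M*(x,a) dx dt < ∞`. -/
theorem accumulated_strain_modular_bound (c T Ih : ℝ) :
    ∃ C : ℝ, 0 ≤ C ∧
      ∀ (Ω : Set E3), IsOpen Ω → Bornology.IsBounded Ω → 0 < T →
      ∀ Mstar : E3 → Mat3 → ℝ, IsNFunction Ω Mstar →
      ∀ h : E3 → ℝ, (∀ x, 0 ≤ h x) → IntegrableOn h Ω → (∫ x in Ω, h x) = Ih →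
      (∀ᵐ x ∂(volume.restrict Ω), ∀ ξ ∈ Sym3,
        Mstar x ((2 : ℝ) • ξ) ≤ c * Mstar x ξ + h x) →
      ∀ a0 : E3 → Mat3, Measurable a0 → (∀ x, a0 x ∈ Sym3) →
      (∫⁻ x in Ω, ENNReal.ofReal (Mstar x (a0 x)) < ⊤) →
      ∀ g : E3 × ℝ → Mat3, Measurable g → (∀ q, g q ∈ Sym3) →
      (∫⁻ q in Ω ×ˢ Ioo (0:ℝ) T, ENNReal.ofReal (Mstar q.1 (g q)) < ⊤) →
      (∫⁻ q in Ω ×ˢ Ioo (0:ℝ) T,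
          ENNReal.ofReal (Mstar q.1
            (a0 q.1 + Matrix.of fun j k => ∫ s in (0:ℝ)..q.2, g (q.1, s) j k)) ≤
        ENNReal.ofReal C *
          (1 + (∫⁻ x in Ω, ENNReal.ofReal (Mstar x (a0 x))) +
            ∫⁻ q in Ω ×ˢ Ioo (0:ℝ) T, ENNReal.ofReal (Mstar q.1 (g q)))) ∧
      (∫⁻ q in Ω ×ˢ Ioo (0:ℝ) T,
          ENNReal.ofReal (Mstar q.1
            (a0 q.1 + Matrix.of fun j k => ∫ s in (0:ℝ)..q.2, g (q.1, s) j k)) < ⊤) := by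
  obtain ⟨k, hk⟩ := pow_unbounded_of_one_lt T one_lt_two
  refine ⟨(k + 1) * max c 1 ^ (k + 1) * |T| * (1 + |Ih|), by positivity, ?_⟩
  intro Ω hΩ _ hT M hN h hh hhi hIh hΔ a0 ha0 ha0s hfa0 g hg hgs hfg
  have hΔ' : ∀ᵐ x ∂volume.restrict Ω, ∀ ξ ∈ Sym3, M x ((2 : ℝ) • ξ) ≤ max c 1 * M x ξ + h x :=
    hΔ.mono fun x hx ξ hξ => (hx ξ hξ).trans
      (add_le_add_left (mul_le_mul_of_nonneg_right (le_max_left c 1) (hN.nonneg x ξ)) _)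
  have hIh0 : 0 ≤ Ih := hIh ▸ integral_nonneg hh
  have hbound : ∫⁻ q in Ω ×ˢ Ioo 0 T, ENNReal.ofReal (M q.1 (accumulatedStrain a0 g q)) ≤
      ENNReal.ofReal ((k + 1) * max c 1 ^ (k + 1) * |T| * (1 + |Ih|)) *
        (1 + (∫⁻ x in Ω, ENNReal.ofReal (M x (a0 x))) +
          ∫⁻ q in Ω ×ˢ Ioo 0 T, ENNReal.ofReal (M q.1 (g q))) := by
    rw [abs_of_pos hT, abs_of_nonneg hIh0, ENNReal.ofReal_mul (by positivity),
      ENNReal.ofReal_mul (by positivity), ENNReal.ofReal_add zero_le_one hIh0,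
      ENNReal.ofReal_one, ← hIh]
    exact (hN.lintegral_accumulatedStrain_le hΩ.measurableSet (le_max_right c 1) hh hhi hΔ'
      hk.le ha0 ha0s hg hgs hfg).trans (ENNReal.mul_add_add_le_mul_one_add _ _ _ _)
  exact ⟨hbound, hbound.trans_lt (ENNReal.mul_lt_top ENNReal.ofReal_lt_top
    (ENNReal.add_lt_top.2 ⟨ENNReal.add_lt_top.2 ⟨ENNReal.one_lt_top, hfa0⟩, hfg⟩))⟩
end
end
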